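/- arXiv:0906.1086 — 2 statements merged into one kernel-verified Lean document; each statement's English description precedes it below -/
import Mathlib

section
/- Let G1 be a snark with a perfect matching M1 such that G1∖M1 consists of exactly two (odd) cycles C and C'; let e1 = ab be an edge of C and e2 = a'b' an edge of C'. Let G2 be a snark with a perfect matching M2 and an F-family {A, B, C, D} for M2, and let e3 = xy be an edge of M2 ∖ (A ∪ B ∪ C ∪ D) whose endpoints x and y lie on two distinct odd cycles of G2∖M2. Form the dot product G = G1·G2 using the edges e1, e2 of G1 and the edge e3 of G2. Then M = M1 ∪ (M2 ∖ {xy}) is a perfect matching of G and {A, B, C, D} is an F-family for M in G. -/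
open SimpleGraph

variable {V : Type*}

/-- Two edges (as unordered pairs) are disjoint: they share no vertex. -/
def Sym2Disjoint {V : Type*} (e f : Sym2 V) : Prop := ∀ v : V, v ∈ e → v ∉ f

/-- A matching of `G`, given as a set of edges of `G` which are pairwise disjoint. -/
def IsMatchingSet (G : SimpleGraph V) (M : Set (Sym2 V)) : Prop :=
  M ⊆ G.edgeSet ∧ M.Pairwise Sym2Disjoint

/-- A perfect matching of `G`: a matching covering every vertex. -/
def IsPerfectMatchingSet (G : SimpleGraph V) (M : Set (Sym2 V)) : Prop :=
  IsMatchingSet G M ∧ ∀ v : V, ∃ e ∈ M, v ∈ e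

/-- A cubic (3-regular) graph. -/
def IsCubic (G : SimpleGraph V) : Prop := ∀ v : V, (G.neighborSet v).ncard = 3

/-- A bridgeless graph. -/
def Bridgeless (G : SimpleGraph V) : Prop := ∀ e : Sym2 V, ¬ G.IsBridge e

/-- A Fulkerson covering: six perfect matchings such that every edge of `G`
lies in exactly two of them (counted with multiplicity in the list). -/
def IsFulkersonCovering (G : SimpleGraph V) (M : Fin 6 → Set (Sym2 V)) : Prop :=
  (∀ i, IsPerfectMatchingSet G (M i)) ∧
  ∀ e ∈ G.edgeSet, ({i : Fin 6 | e ∈ M i} : Set (Fin 6)).ncard = 2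

/-- An FR-triple: three perfect matchings with empty intersection. -/
def IsFRTriple (G : SimpleGraph V) (M1 M2 M3 : Set (Sym2 V)) : Prop :=
  IsPerfectMatchingSet G M1 ∧ IsPerfectMatchingSet G M2 ∧ IsPerfectMatchingSet G M3 ∧
  M1 ∩ M2 ∩ M3 = ∅

/-- `tSet G M1 M2 M3 k` is the set `T_k` of edges of `G` lying in exactly `k`
of the three matchings (counted with multiplicity). -/
def tSet (G : SimpleGraph V) (M1 M2 M3 : Set (Sym2 V)) (k : ℕ) : Set (Sym2 V) :=
  {e ∈ G.edgeSet | ({i : Fin 3 | e ∈ ![M1, M2, M3] i} : Set (Fin 3)).ncard = k}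

/-- Two FR-triples are compatible when `T_0 = T'_2` and `T_2 = T'_0`. -/
def CompatibleFR (G : SimpleGraph V) (M1 M2 M3 N1 N2 N3 : Set (Sym2 V)) : Prop :=
  tSet G M1 M2 M3 0 = tSet G N1 N2 N3 2 ∧ tSet G M1 M2 M3 2 = tSet G N1 N2 N3 0
/-- `S` is (the vertex set of) a cycle of `G∖M`: a connected component of the graph
obtained from `G` by deleting the edges of `M` (for `M` a perfect matching of a cubic
graph `G`, these components are exactly the cycles of `G∖M`). -/
def IsCycleOf (G : SimpleGraph V) (M : Set (Sym2 V)) (S : Set V) : Prop :=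
  ∃ c : (G.deleteEdges M).ConnectedComponent, S = c.supp

/-- The edges of the cycle of `G∖M` with vertex set `S`: edges of `G` not in `M`
with both endpoints in `S`. -/
def cycleEdges (G : SimpleGraph V) (M : Set (Sym2 V)) (S : Set V) : Set (Sym2 V) :=
  {e | e ∈ G.edgeSet ∧ e ∉ M ∧ ∀ v ∈ e, v ∈ S}

/-- The vertices of `S` incident with an edge of `X`. -/
def incVerts (S : Set V) (X : Set (Sym2 V)) : Set V :=
  {v | v ∈ S ∧ ∃ e ∈ X, v ∈ e}

/-- `A` is an `M`-balanced matching: `A = M ∩ M'` for some perfect matching `M'`. -/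
def IsBalancedMatching (G : SimpleGraph V) (M A : Set (Sym2 V)) : Prop :=
  ∃ M' : Set (Sym2 V), IsPerfectMatchingSet G M' ∧ A = M ∩ M'

/-- `{A, B, C, D}` is an F-family for the perfect matching `M` of `G`:
four pairwise disjoint `M`-balanced matchings such that
(i) every odd cycle of `G∖M` has, for each member, exactly one vertex incident with an
edge of that member;
(ii) every even cycle of `G∖M` incident with an edge of `A ∪ B ∪ C ∪ D` contains exactly
four vertices incident with edges of `A ∪ B ∪ C ∪ D`, and these four are incident to a
single member, or two of them are incident to one member and the other two to another
single member;
(iii) for each cycle of `G∖M` the four vertices so determined are covered by two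
disjoint edges of `G` whose endpoints all lie among these four vertices. -/
def IsFFamily (G : SimpleGraph V) (M A B C D : Set (Sym2 V)) : Prop :=
  (∀ X ∈ ({A, B, C, D} : Set (Set (Sym2 V))), IsBalancedMatching G M X) ∧
  [A, B, C, D].Pairwise Disjoint ∧
  (∀ S : Set V, IsCycleOf G M S → Odd S.ncard →
    ∀ X ∈ ({A, B, C, D} : Set (Set (Sym2 V))), (incVerts S X).ncard = 1) ∧
  (∀ S : Set V, IsCycleOf G M S → Even S.ncard →
    (incVerts S (A ∪ B ∪ C ∪ D)).Nonempty →
    (incVerts S (A ∪ B ∪ C ∪ D)).ncard = 4 ∧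
    ((∃ X ∈ ({A, B, C, D} : Set (Set (Sym2 V))),
        incVerts S (A ∪ B ∪ C ∪ D) = incVerts S X) ∨
     (∃ X ∈ ({A, B, C, D} : Set (Set (Sym2 V))),
      ∃ Y ∈ ({A, B, C, D} : Set (Set (Sym2 V))), X ≠ Y ∧
        (incVerts S X).ncard = 2 ∧ (incVerts S Y).ncard = 2 ∧
        incVerts S (A ∪ B ∪ C ∪ D) = incVerts S X ∪ incVerts S Y))) ∧
  (∀ S : Set V, IsCycleOf G M S → (incVerts S (A ∪ B ∪ C ∪ D)).Nonempty →
    ∃ e1 e2 : Sym2 V, e1 ∈ G.edgeSet ∧ e2 ∈ G.edgeSet ∧ e1 ≠ e2 ∧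
      Sym2Disjoint e1 e2 ∧
      (∀ v : V, (v ∈ e1 ∨ v ∈ e2) ↔ v ∈ incVerts S (A ∪ B ∪ C ∪ D)))

/-- `N` is a set of edges consisting, for each cycle of `G∖M` incident with the family
`{A, B, C, D}`, of exactly two disjoint edges of `G` covering the four determined
vertices of that cycle (and nothing else). -/
def IsNSet (G : SimpleGraph V) (M A B C D N : Set (Sym2 V)) : Prop :=
  (∀ e ∈ N, ∃ S : Set V, IsCycleOf G M S ∧
      (incVerts S (A ∪ B ∪ C ∪ D)).Nonempty ∧ ∀ v ∈ e, v ∈ S) ∧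
  (∀ S : Set V, IsCycleOf G M S → (incVerts S (A ∪ B ∪ C ∪ D)).Nonempty →
    ∃ e1 e2 : Sym2 V, e1 ∈ G.edgeSet ∧ e2 ∈ G.edgeSet ∧ e1 ≠ e2 ∧
      Sym2Disjoint e1 e2 ∧
      (∀ v : V, (v ∈ e1 ∨ v ∈ e2) ↔ v ∈ incVerts S (A ∪ B ∪ C ∪ D)) ∧
      {e ∈ N | ∀ v ∈ e, v ∈ S} = {e1, e2})
/-- A cubic graph is 3-edge-colourable when its edge set can be partitioned into three
perfect matchings. -/
def IsThreeEdgeColourable (G : SimpleGraph V) : Prop :=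
  ∃ M1 M2 M3 : Set (Sym2 V),
    IsPerfectMatchingSet G M1 ∧ IsPerfectMatchingSet G M2 ∧ IsPerfectMatchingSet G M3 ∧
    [M1, M2, M3].Pairwise Disjoint ∧ M1 ∪ M2 ∪ M3 = G.edgeSet

/-- Cyclically 4-edge-connected: every set of edges whose removal leaves at least two
connected components each containing a cycle has at least 4 edges. -/
def CyclicallyFourEdgeConnected (G : SimpleGraph V) : Prop :=
  ∀ F : Set (Sym2 V), F ⊆ G.edgeSet →
    (∃ c1 c2 : (G.deleteEdges F).ConnectedComponent, c1 ≠ c2 ∧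
      ¬ ((G.deleteEdges F).induce c1.supp).IsAcyclic ∧
      ¬ ((G.deleteEdges F).induce c2.supp).IsAcyclic) →
    4 ≤ F.ncard

/-- A snark: a bridgeless, cyclically 4-edge-connected cubic graph which is not
3-edge-colourable. -/
def IsSnark (G : SimpleGraph V) : Prop :=
  IsCubic G ∧ Bridgeless G ∧ CyclicallyFourEdgeConnected G ∧ ¬ IsThreeEdgeColourable G

/-- Vertex set of the dot product `G1·G2`: the vertices of `G1` together with the
vertices of `G2` other than the two endpoints `x1, x2` of the chosen edge of `G2`. -/
abbrev DotVert (V1 : Type*) {V2 : Type*} (x1 x2 : V2) :=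
  V1 ⊕ {w : V2 // w ≠ x1 ∧ w ≠ x2}

/-- Transport of a set of edges of `G1` to the dot product vertex type. -/
def liftEdgesLeft {V1 V2 : Type*} (x1 x2 : V2) (E : Set (Sym2 V1)) :
    Set (Sym2 (DotVert V1 x1 x2)) :=
  Sym2.map (Sum.inl : V1 → DotVert V1 x1 x2) '' E

/-- Transport of a set of edges of `G2` avoiding `x1, x2` to the dot product
vertex type. -/
def liftEdgesRight (V1 : Type*) {V2 : Type*} (x1 x2 : V2) (E : Set (Sym2 V2)) :
    Set (Sym2 (DotVert V1 x1 x2)) :=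
  {e | ∃ (a b : V2) (ha : a ≠ x1 ∧ a ≠ x2) (hb : b ≠ x1 ∧ b ≠ x2),
    s(a, b) ∈ E ∧ e = s(Sum.inr ⟨a, ha⟩, Sum.inr ⟨b, hb⟩)}

/-- The dot product `G1·G2` of two cubic graphs, built from two (nonadjacent) edges
`u1v1`, `u2v2` of `G1` and an edge `x1x2` of `G2`, where `x1` has neighbours
`y1, y2, x2` and `x2` has neighbours `z1, z2, x1`: delete the edges `u1v1, u2v2` from
`G1`, delete the vertices `x1, x2` from `G2`, and add the four edges
`u1y1, v1y2, u2z1, v2z2`. -/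
def dotProd {V1 V2 : Type*} (G1 : SimpleGraph V1) (G2 : SimpleGraph V2)
    (u1 v1 u2 v2 : V1) (x1 x2 y1 y2 z1 z2 : V2)
    (hy1 : y1 ≠ x1 ∧ y1 ≠ x2) (hy2 : y2 ≠ x1 ∧ y2 ≠ x2)
    (hz1 : z1 ≠ x1 ∧ z1 ≠ x2) (hz2 : z2 ≠ x1 ∧ z2 ≠ x2) :
    SimpleGraph (DotVert V1 x1 x2) :=
  SimpleGraph.fromEdgeSet
    (liftEdgesLeft x1 x2 (G1.edgeSet \ {s(u1, v1), s(u2, v2)}) ∪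
     liftEdgesRight V1 x1 x2 G2.edgeSet ∪
     {s(Sum.inl u1, Sum.inr ⟨y1, hy1⟩), s(Sum.inl v1, Sum.inr ⟨y2, hy2⟩),
      s(Sum.inl u2, Sum.inr ⟨z1, hz1⟩), s(Sum.inl v2, Sum.inr ⟨z2, hz2⟩)})

/-!
The cycles of `G∖M` are the cycles of `G2∖M2` avoiding `x` and `y`, together with the cycle of
`G2∖M2` through `x` (resp. `y`), opened at that vertex and closed up again through the bridges by
the path `C - ab` (resp. `C' - a'b'`). Because `C` and `C'` are odd, every cycle of `G∖M` has the
parity of the cycle of `G2∖M2` it comes from, and since the members of the family avoid `x` and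
`y`, it meets them in the same vertices. Hence conditions (i)–(iii) carry over.

For balancedness, let `A = M2 ∩ M'`. As `xy ∉ A`, the perfect matching `M'` matches `x` to some
`y_i` and `y` to some `z_j`. Replacing these two edges by the bridges at `y_i` and `z_j`, and
matching the even paths left over from `C` and `C'` along themselves, gives a perfect matching
`M''` of `G` with `M ∩ M'' = A`.
-/

theorem Set.subset_union_of_mem_insert4 {α : Type*} {A B C D X : Set α}
    (hX : X ∈ ({A, B, C, D} : Set (Set α))) : X ⊆ A ∪ B ∪ C ∪ D := by
  simp only [Set.mem_insert_iff, Set.mem_singleton_iff] at hX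
  rcases hX with rfl | rfl | rfl | rfl <;> intro e he <;> simp [he]

theorem Set.ncard_eq_ncard_preimage_inl_add_ncard_preimage_inr {α β : Type*} [Finite α]
    [Finite β] (s : Set (α ⊕ β)) : s.ncard = (Sum.inl ⁻¹' s).ncard + (Sum.inr ⁻¹' s).ncard := by
  have hs : s = Sum.inl '' (Sum.inl ⁻¹' s) ∪ Sum.inr '' (Sum.inr ⁻¹' s) := by
    ext (u | w) <;> simp
  have hdisj : Disjoint (Sum.inl '' (Sum.inl ⁻¹' s)) (Sum.inr '' (Sum.inr ⁻¹' s)) :=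
    Set.disjoint_left.mpr fun _ ⟨_, _, h⟩ ⟨_, _, h'⟩ => Sum.inl_ne_inr (h.trans h'.symm)
  conv_lhs => rw [hs, Set.ncard_union_eq hdisj]
  rw [Set.ncard_image_of_injective _ Sum.inl_injective,
    Set.ncard_image_of_injective _ Sum.inr_injective]

theorem Set.ncard_preimage_val_add_ncard_inter_pair {α : Type*} [Finite α] {x y : α}
    (S : Set α) :
    (Subtype.val ⁻¹' S : Set {w : α // w ≠ x ∧ w ≠ y}).ncard + (S ∩ {x, y}).ncard = S.ncard := by
  have hS : (Subtype.val ⁻¹' S : Set {w : α // w ≠ x ∧ w ≠ y}) =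
      Subtype.val ⁻¹' (S \ {x, y}) := by
    ext w
    simp [w.2.1, w.2.2]
  rw [hS, Set.ncard_preimage_of_injective_subset_range Subtype.val_injective, add_comm,
    Set.ncard_inter_add_ncard_sdiff_eq_ncard]
  rintro v ⟨-, hv⟩
  simp only [Set.mem_insert_iff, Set.mem_singleton_iff, not_or] at hv
  exact ⟨⟨v, hv⟩, rfl⟩

theorem List.Nodup.mem_dropLast_iff {α : Type*} {l : List α} {a : α} (hl : l.Nodup) (h : l ≠ []) :
    a ∈ l.dropLast ↔ a ∈ l ∧ a ≠ l.getLast h := by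
  have hsplit := List.dropLast_append_getLast h
  have hnd : (l.dropLast ++ [l.getLast h]).Nodup := by rwa [hsplit]
  have hlast : l.getLast h ∉ l.dropLast := fun hmem =>
    (List.nodup_append.mp hnd).2.2 _ hmem _ (List.mem_singleton_self _) rfl
  refine ⟨fun ha => ⟨List.mem_of_mem_dropLast ha, fun hal => hlast (hal ▸ ha)⟩, fun ⟨ha, hne⟩ => ?_⟩
  rw [← hsplit, List.mem_append, List.mem_singleton] at ha
  exact ha.resolve_right hne

theorem List.ncard_setOf_mem_of_nodup {α : Type*} {l : List α} (hl : l.Nodup) :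
    {a | a ∈ l}.ncard = l.length := by
  classical
  rw [← List.toFinset_card_of_nodup hl, ← Set.ncard_coe_finset, List.coe_toFinset]

theorem SimpleGraph.Reachable.map_of_adj {α β : Type*} {G : SimpleGraph α} {K : SimpleGraph β}
    {f : α → β} (hf : ∀ u v, G.Adj u v → K.Reachable (f u) (f v)) {u v : α}
    (h : G.Reachable u v) : K.Reachable (f u) (f v) := by
  obtain ⟨p⟩ := h
  induction p with
  | nil => rfl
  | cons hadj _ ih => exact (hf _ _ hadj).trans ih

theorem SimpleGraph.Reachable.eq_of_adj {α β : Type*} {G : SimpleGraph α} {f : α → β}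
    (hf : ∀ u v, G.Adj u v → f u = f v) {u v : α} (h : G.Reachable u v) : f u = f v :=
  SimpleGraph.reachable_bot.mp <|
    h.map_of_adj (K := ⊥) fun u v huv => SimpleGraph.reachable_bot.mpr (hf u v huv)

theorem SimpleGraph.ConnectedComponent.exists_supp_eq_preimage {α β : Type*}
    {G : SimpleGraph α} {f : α → β} (hf : ∀ u v, G.Reachable u v ↔ f u = f v)
    (K : G.ConnectedComponent) : ∃ b, K.supp = f ⁻¹' {b} := by
  induction K using SimpleGraph.ConnectedComponent.ind with
  | h v =>
    refine ⟨f v, Set.ext fun u => ?_⟩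
    rw [SimpleGraph.ConnectedComponent.mem_supp_iff, SimpleGraph.ConnectedComponent.eq, hf]
    rfl

section Sym2Map

variable {α β : Type*} {f : α → β}

theorem Sym2.mem_map_iff_of_injective (hf : Function.Injective f) {e : Sym2 α} {a : α} :
    f a ∈ Sym2.map f e ↔ a ∈ e := by
  simp [Sym2.mem_map, hf.eq_iff]

theorem Sym2.mk_mem_image_map (hf : Function.Injective f) {E : Set (Sym2 α)} {u v : α} :
    s(f u, f v) ∈ Sym2.map f '' E ↔ s(u, v) ∈ E := by
  rw [← Sym2.map_mk, (Sym2.map.injective hf).mem_set_image]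

theorem Sym2.mem_range_of_mem_image_map {E : Set (Sym2 α)} {e : Sym2 β} {v : β}
    (he : e ∈ Sym2.map f '' E) (hv : v ∈ e) : v ∈ Set.range f := by
  obtain ⟨e, -, rfl⟩ := he
  obtain ⟨a, -, rfl⟩ := Sym2.mem_map.mp hv
  exact ⟨a, rfl⟩

theorem Sym2.exists_map_eq_of_forall_mem_range {e : Sym2 β} (he : ∀ v ∈ e, v ∈ Set.range f) :
    ∃ e' : Sym2 α, Sym2.map f e' = e := by
  induction e using Sym2.ind with
  | h p q =>
    obtain ⟨p', rfl⟩ := he p (Sym2.mem_mk_left _ _)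
    obtain ⟨q', rfl⟩ := he q (Sym2.mem_mk_right _ _)
    exact ⟨s(p', q'), rfl⟩

end Sym2Map

section Matching

variable {W : Type*} {G : SimpleGraph W} {M : Set (Sym2 W)}

theorem Sym2Disjoint.symm {e f : Sym2 W} (h : Sym2Disjoint e f) : Sym2Disjoint f e :=
  fun v hf he => h v he hf

theorem Set.Pairwise.union_sym2Disjoint {P Q : Set (Sym2 W)} (hP : P.Pairwise Sym2Disjoint)
    (hQ : Q.Pairwise Sym2Disjoint) (hPQ : ∀ e ∈ P, ∀ f ∈ Q, Sym2Disjoint e f) :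
    (P ∪ Q).Pairwise Sym2Disjoint :=
  Set.pairwise_union.mpr ⟨hP, hQ, fun e he f hf _ => ⟨hPQ e he f hf, (hPQ e he f hf).symm⟩⟩

theorem isPerfectMatchingSet_iff_existsUnique :
    IsPerfectMatchingSet G M ↔ M ⊆ G.edgeSet ∧ ∀ v, ∃! w, s(v, w) ∈ M := by
  refine ⟨fun ⟨⟨hsub, hpair⟩, hcov⟩ => ⟨hsub, fun v => ?_⟩, fun ⟨hsub, huniq⟩ => ⟨⟨hsub, ?_⟩, ?_⟩⟩
  · obtain ⟨e, he, hve⟩ := hcov v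
    obtain ⟨w, rfl⟩ := Sym2.mem_iff_exists.mp hve
    refine ⟨w, he, fun w' hw' => ?_⟩
    by_contra hne
    exact hpair hw' he (fun h => hne (Sym2.congr_right.mp h)) v (Sym2.mem_mk_left _ _)
      (Sym2.mem_mk_left _ _)
  · intro e he f hf hne v hve hvf
    obtain ⟨w, rfl⟩ := Sym2.mem_iff_exists.mp hve
    obtain ⟨w', rfl⟩ := Sym2.mem_iff_exists.mp hvf
    exact hne (congrArg _ ((huniq v).unique he hf))
  · intro v
    obtain ⟨w, hw, -⟩ := huniq v
    exact ⟨_, hw, Sym2.mem_mk_left _ _⟩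

theorem IsPerfectMatchingSet.eq_of_mem {v w w' : W} (hM : IsPerfectMatchingSet G M)
    (hw : s(v, w) ∈ M) (hw' : s(v, w') ∈ M) : w = w' :=
  ((isPerfectMatchingSet_iff_existsUnique.mp hM).2 v).unique hw hw'

theorem IsPerfectMatchingSet.deleteEdges_adj_iff {v w t : W} (hM : IsPerfectMatchingSet G M)
    (hw : s(v, w) ∈ M) : (G.deleteEdges M).Adj v t ↔ G.Adj v t ∧ t ≠ w := by
  rw [SimpleGraph.deleteEdges_adj]
  exact and_congr_right fun _ => ⟨fun h ht => h (ht ▸ hw), fun h ht => h (hM.eq_of_mem ht hw)⟩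

theorem IsPerfectMatchingSet.exists_partner_of_neighborSet_eq {v p q r : W}
    (hM : IsPerfectMatchingSet G M) (hN : G.neighborSet v = {p, q, r}) (hr : s(v, r) ∉ M) :
    ∃ t, (t = p ∨ t = q) ∧ s(v, t) ∈ M := by
  obtain ⟨t, ht, -⟩ := (isPerfectMatchingSet_iff_existsUnique.mp hM).2 v
  have hadj : t ∈ G.neighborSet v := hM.1.1 ht
  rw [hN] at hadj
  rcases hadj with rfl | rfl | rfl
  exacts [⟨_, Or.inl rfl, ht⟩, ⟨_, Or.inr rfl, ht⟩, absurd ht hr]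

theorem IsPerfectMatchingSet.isCycles_deleteEdges (hG : IsCubic G)
    (hM : IsPerfectMatchingSet G M) : (G.deleteEdges M).IsCycles := by
  intro v _
  obtain ⟨w, hw, -⟩ := (isPerfectMatchingSet_iff_existsUnique.mp hM).2 v
  have hvw : w ∈ G.neighborSet v := hM.1.1 hw
  have : (G.deleteEdges M).neighborSet v = G.neighborSet v \ {w} := by
    ext t
    simp only [SimpleGraph.mem_neighborSet, Set.mem_sdiff, Set.mem_singleton_iff,
      hM.deleteEdges_adj_iff hw]
  rw [this, Set.ncard_sdiff_singleton_of_mem hvw, hG v]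

theorem IsPerfectMatchingSet.deleteEdges_adj_iff_of_neighborSet_eq {v p q r t : W}
    (hM : IsPerfectMatchingSet G M)
    (hN : G.neighborSet v = {p, q, r}) (hr : s(v, r) ∈ M) (hp : p ≠ r) (hq : q ≠ r) :
    (G.deleteEdges M).Adj v t ↔ t = p ∨ t = q := by
  rw [hM.deleteEdges_adj_iff hr, ← SimpleGraph.mem_neighborSet, hN]
  simp only [Set.mem_insert_iff, Set.mem_singleton_iff]
  constructor
  · rintro ⟨h | h | h, hne⟩
    exacts [Or.inl h, Or.inr h, absurd h hne]
  · rintro (rfl | rfl)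
    exacts [⟨Or.inl rfl, hp⟩, ⟨Or.inr (Or.inl rfl), hq⟩]

theorem adj_of_mem_cycleEdges {S : Set W} {u v : W} (he : s(u, v) ∈ cycleEdges G M S) :
    (G.deleteEdges M).Adj u v :=
  SimpleGraph.deleteEdges_adj.mpr ⟨he.1, he.2.1⟩

end Matching

section PerfectMatchingOn

variable {W W' : Type*} {G : SimpleGraph W} {N P Q : Set (Sym2 W)} {S T : Set W}

def IsPerfectMatchingOn (G : SimpleGraph W) (N : Set (Sym2 W)) (S : Set W) : Prop :=
  IsMatchingSet G N ∧ ∀ v, (∃ e ∈ N, v ∈ e) ↔ v ∈ S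

theorem isPerfectMatchingSet_iff_isPerfectMatchingOn_univ :
    IsPerfectMatchingSet G N ↔ IsPerfectMatchingOn G N Set.univ := by
  simp [IsPerfectMatchingSet, IsPerfectMatchingOn]

theorem IsPerfectMatchingOn.mono {G' : SimpleGraph W} (hN : IsPerfectMatchingOn G N S)
    (h : G ≤ G') : IsPerfectMatchingOn G' N S :=
  ⟨⟨hN.1.1.trans (SimpleGraph.edgeSet_mono h), hN.1.2⟩, hN.2⟩

theorem IsPerfectMatchingOn.union (hP : IsPerfectMatchingOn G P S)
    (hQ : IsPerfectMatchingOn G Q T) (hST : Disjoint S T) :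
    IsPerfectMatchingOn G (P ∪ Q) (S ∪ T) := by
  refine ⟨⟨Set.union_subset hP.1.1 hQ.1.1, hP.1.2.union_sym2Disjoint hQ.1.2 ?_⟩, fun v => ?_⟩
  · exact fun e he f hf v hve hvf =>
      Set.disjoint_left.mp hST ((hP.2 v).mp ⟨e, he, hve⟩) ((hQ.2 v).mp ⟨f, hf, hvf⟩)
  · rw [Set.mem_union, ← hP.2, ← hQ.2]
    simp only [Set.mem_union, or_and_right, exists_or]

theorem IsPerfectMatchingOn.sdiff_singleton {e : Sym2 W} (hN : IsPerfectMatchingOn G N S)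
    (he : e ∈ N) : IsPerfectMatchingOn G (N \ {e}) (S \ {v | v ∈ e}) := by
  refine ⟨⟨Set.sdiff_subset.trans hN.1.1, hN.1.2.mono Set.sdiff_subset⟩, fun v => ⟨?_, ?_⟩⟩
  · rintro ⟨f, ⟨hf, hfe⟩, hvf⟩
    exact ⟨(hN.2 v).mp ⟨f, hf, hvf⟩, fun hve => hN.1.2 hf he hfe v hvf hve⟩
  · rintro ⟨hvS, hve⟩
    obtain ⟨f, hf, hvf⟩ := (hN.2 v).mpr hvS
    exact ⟨f, ⟨hf, fun hfe => hve (hfe ▸ hvf)⟩, hvf⟩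

theorem isPerfectMatchingOn_singleton {e : Sym2 W} (he : e ∈ G.edgeSet) :
    IsPerfectMatchingOn G {e} {v | v ∈ e} :=
  ⟨⟨Set.singleton_subset_iff.mpr he, Set.pairwise_singleton _ _⟩, fun v => by simp⟩

theorem IsPerfectMatchingOn.image_map {G' : SimpleGraph W'} {f : W → W'}
    (hf : Function.Injective f) (hN : IsPerfectMatchingOn G N S)
    (hG : ∀ e ∈ N, Sym2.map f e ∈ G'.edgeSet) :
    IsPerfectMatchingOn G' (Sym2.map f '' N) (f '' S) := by
  refine ⟨⟨Set.image_subset_iff.mpr hG, ?_⟩, fun v => ⟨?_, ?_⟩⟩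
  · rintro _ ⟨e, he, rfl⟩ _ ⟨e', he', rfl⟩ hne v hv hv'
    obtain ⟨a, ha, rfl⟩ := Sym2.mem_map.mp hv
    exact hN.1.2 he he' (fun h => hne (h ▸ rfl)) a ha
      ((Sym2.mem_map_iff_of_injective hf).mp hv')
  · rintro ⟨_, ⟨e, he, rfl⟩, hv⟩
    obtain ⟨a, ha, rfl⟩ := Sym2.mem_map.mp hv
    exact ⟨a, (hN.2 a).mp ⟨e, he, ha⟩, rfl⟩
  · rintro ⟨a, ha, rfl⟩
    obtain ⟨e, he, hae⟩ := (hN.2 a).mpr ha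
    exact ⟨_, ⟨e, he, rfl⟩, (Sym2.mem_map_iff_of_injective hf).mpr hae⟩

theorem IsPerfectMatchingOn.preimage_map {G' : SimpleGraph W'} {N' : Set (Sym2 W')}
    {S' : Set W'} {f : W → W'} (hf : Function.Injective f) (hN : IsPerfectMatchingOn G' N' S')
    (hS : S' ⊆ Set.range f) :
    IsPerfectMatchingOn (G'.comap f) (Sym2.map f ⁻¹' N') (f ⁻¹' S') := by
  refine ⟨⟨fun e he => ?_, fun e he e' he' hne a ha ha' => ?_⟩, fun a => ⟨?_, ?_⟩⟩
  · induction e using Sym2.ind with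
    | h p q => exact hN.1.1 he
  · exact hN.1.2 he he' (fun h => hne (Sym2.map.injective hf h)) (f a)
      ((Sym2.mem_map_iff_of_injective hf).mpr ha) ((Sym2.mem_map_iff_of_injective hf).mpr ha')
  · rintro ⟨e, he, hae⟩
    exact (hN.2 (f a)).mp ⟨_, he, (Sym2.mem_map_iff_of_injective hf).mpr hae⟩
  · intro ha
    obtain ⟨e', he', hae'⟩ := (hN.2 (f a)).mpr ha
    obtain ⟨e, rfl⟩ := Sym2.exists_map_eq_of_forall_mem_range fun v hv =>
      hS ((hN.2 v).mp ⟨_, he', hv⟩)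
    exact ⟨e, he', (Sym2.mem_map_iff_of_injective hf).mp hae'⟩

theorem IsPerfectMatchingSet.isPerfectMatchingOn_sdiff_pair {M : Set (Sym2 W)} {v v' w w' : W}
    (hM : IsPerfectMatchingSet G M) (hw : s(v, w) ∈ M) (hw' : s(v', w') ∈ M)
    (hne : s(v', w') ≠ s(v, w)) :
    IsPerfectMatchingOn G ((M \ {s(v, w)}) \ {s(v', w')}) {v, v', w, w'}ᶜ := by
  convert ((isPerfectMatchingSet_iff_isPerfectMatchingOn_univ.mp hM).sdiff_singleton
    hw).sdiff_singleton (Set.mem_sdiff_singleton.mpr ⟨hw', hne⟩) using 1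
  ext t
  simp only [Set.mem_compl_iff, Set.mem_insert_iff, Set.mem_singleton_iff, not_or,
    Set.mem_sdiff, Set.mem_univ, true_and, Set.mem_ofPred_eq, Sym2.mem_iff]
  tauto

end PerfectMatchingOn

namespace SimpleGraph

variable {W : Type*} {G : SimpleGraph W}

def Walk.alternateEdges : ∀ {u v : W}, G.Walk u v → Set (Sym2 W)
  | _, _, .nil => ∅
  | _, _, .cons _ .nil => ∅
  | u, _, .cons (v := w) _ (.cons _ p) => insert s(u, w) p.alternateEdges

theorem Walk.alternateEdges_subset_edges {u v : W} (p : G.Walk u v) :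
    p.alternateEdges ⊆ {e | e ∈ p.edges} := by
  fun_induction alternateEdges p <;> simp_all [Set.subset_def]

theorem Walk.exists_mem_alternateEdges_iff {u v : W} (p : G.Walk u v) (hp : Even p.length)
    (w : W) : (∃ e ∈ p.alternateEdges, w ∈ e) ↔ w ∈ p.support.dropLast := by
  fun_induction alternateEdges p with
  | case1 => simp
  | case2 => simp at hp
  | case3 _ _ _ _ _ _ p ih =>
    have hp' : Even p.length := by simpa [Nat.even_add_one] using hp
    simp [ih hp', List.dropLast_cons_of_ne_nil, p.support_ne_nil, or_assoc]

theorem Walk.IsPath.pairwise_alternateEdges {u v : W} {p : G.Walk u v} (hp : p.IsPath) :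
    p.alternateEdges.Pairwise Sym2Disjoint := by
  fun_induction alternateEdges p with
  | case1 => simp
  | case2 => simp
  | case3 u _ w' _ _ _ p ih =>
    refine (ih hp.of_cons.of_cons).insert fun e he _ => ?_
    have hsupp : ∀ t ∈ e, t ∈ p.support := fun t ht =>
      p.mem_support_of_mem_edges (p.alternateEdges_subset_edges he) ht
    have hu : u ∉ p.support := fun h => ((Walk.cons_isPath_iff _ _).mp hp).2 (by simp [h])
    have hw : w' ∉ p.support := ((Walk.cons_isPath_iff _ _).mp hp.of_cons).2
    have hdisj : Sym2Disjoint s(u, w') e := by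
      rintro t ht hte
      rcases Sym2.mem_iff.mp ht with rfl | rfl
      exacts [hu (hsupp _ hte), hw (hsupp _ hte)]
    exact ⟨hdisj, hdisj.symm⟩

/-- In a disjoint union of cycles, an odd cycle with one vertex removed is a path with an even
number of vertices, so it has a perfect matching. -/
theorem IsCycles.exists_isPerfectMatchingOn_supp_diff_singleton [Finite W] (hG : G.IsCycles)
    {c : G.ConnectedComponent} {v : W} (hv : v ∈ c.supp) (hn : (G.neighborSet v).Nonempty)
    (hodd : Odd c.supp.ncard) : ∃ P, IsPerfectMatchingOn G P (c.supp \ {v}) := by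
  obtain ⟨p, hpc, hverts⟩ := hG.exists_cycle_toSubgraph_verts_eq_connectedComponentSupp hv hn
  have hq : p.tail.IsPath := hpc.isPath_tail
  have hsupp : c.supp = {w | w ∈ p.tail.support} := by
    ext w
    rw [← hverts, Walk.mem_verts_toSubgraph, ← Walk.cons_support_tail hpc.not_nil]
    simp only [List.mem_cons, Set.mem_ofPred_eq, or_iff_right_iff_imp]
    rintro rfl
    exact p.tail.end_mem_support
  have heven : Even p.tail.length := by
    rw [hsupp, List.ncard_setOf_mem_of_nodup hq.support_nodup, Walk.length_support] at hodd
    simpa [Nat.odd_add_one] using hodd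
  refine ⟨_, ⟨fun e he => p.tail.edges_subset_edgeSet (p.tail.alternateEdges_subset_edges he),
    hq.pairwise_alternateEdges⟩, fun w => ?_⟩
  rw [p.tail.exists_mem_alternateEdges_iff heven,
    hq.support_nodup.mem_dropLast_iff p.tail.support_ne_nil, Walk.getLast_support, hsupp]
  rfl

theorem IsCycles.exists_isPerfectMatchingOn_compl_pair [Finite W] (hG : G.IsCycles)
    {c c' : G.ConnectedComponent} (hcc' : c ≠ c') (honly : ∀ d, d = c ∨ d = c') (hc : Odd c.supp.ncard)
    (hc' : Odd c'.supp.ncard) {u u' : W} (hu : u ∈ c.supp) (hu' : u' ∈ c'.supp)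
    (hn : (G.neighborSet u).Nonempty) (hn' : (G.neighborSet u').Nonempty) :
    ∃ N, IsPerfectMatchingOn G N {u, u'}ᶜ := by
  obtain ⟨P, hP⟩ := hG.exists_isPerfectMatchingOn_supp_diff_singleton hu hn hc
  obtain ⟨P', hP'⟩ := hG.exists_isPerfectMatchingOn_supp_diff_singleton hu' hn' hc'
  have hdisj : ∀ {t}, t ∈ c.supp → t ∉ c'.supp := fun ht ht' => hcc' (ht.symm.trans ht')
  refine ⟨P ∪ P', ?_⟩
  convert hP.union hP' (Set.disjoint_left.mpr fun t ht ht' => hdisj ht.1 ht'.1) using 1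
  ext t
  simp only [Set.mem_compl_iff, Set.mem_insert_iff, Set.mem_singleton_iff, not_or,
    Set.mem_union, Set.mem_sdiff]
  rcases honly (G.connectedComponentMk t) with ht | ht
  · have htu' : t ≠ u' := fun h => hdisj ht (h ▸ hu')
    have ht : t ∈ c.supp := ht
    tauto
  · have htu : t ≠ u := fun h => hdisj (h ▸ hu) ht
    have ht : t ∈ c'.supp := ht
    have ht' : t ∉ c.supp := fun h => hdisj h ht
    tauto

end SimpleGraph

section DotProduct

variable {V1 V2 : Type*} {x1 x2 : V2}

def liftVertsRight (V1 : Type*) {V2 : Type*} (x1 x2 : V2) (Q : Set V2) :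
    Set (DotVert V1 x1 x2) :=
  Sum.inr '' (Subtype.val ⁻¹' Q)

theorem liftEdgesRight_eq_image (E : Set (Sym2 V2)) :
    liftEdgesRight V1 x1 x2 E = Sym2.map Sum.inr '' (Sym2.map Subtype.val ⁻¹' E) := by
  ext e
  constructor
  · rintro ⟨p, q, hp, hq, h, rfl⟩
    exact ⟨s(⟨p, hp⟩, ⟨q, hq⟩), h, rfl⟩
  · rintro ⟨f, hf, rfl⟩
    induction f using Sym2.ind with
    | h p q => exact ⟨p, q, p.2, q.2, hf, rfl⟩

variable {E1 : Set (Sym2 V1)} {E2 : Set (Sym2 V2)} {u v : V1}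
  {w w' : {w : V2 // w ≠ x1 ∧ w ≠ x2}}

@[simp] theorem inl_inl_mem_liftEdgesLeft :
    s(.inl u, .inl v) ∈ liftEdgesLeft x1 x2 E1 ↔ s(u, v) ∈ E1 :=
  Sym2.mk_mem_image_map Sum.inl_injective

@[simp] theorem inr_inr_mem_liftEdgesRight :
    s(.inr w, .inr w') ∈ liftEdgesRight V1 x1 x2 E2 ↔ s(w.1, w'.1) ∈ E2 := by
  rw [liftEdgesRight_eq_image, Sym2.mk_mem_image_map Sum.inr_injective]
  rfl

theorem not_mem_liftEdgesLeft_of_inr_mem {e : Sym2 (DotVert V1 x1 x2)} (hw : .inr w ∈ e) :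
    e ∉ liftEdgesLeft x1 x2 E1 := fun he => by
  simpa using Sym2.mem_range_of_mem_image_map he hw

theorem not_mem_liftEdgesRight_of_inl_mem {e : Sym2 (DotVert V1 x1 x2)} (hu : .inl u ∈ e) :
    e ∉ liftEdgesRight V1 x1 x2 E2 := fun he => by
  rw [liftEdgesRight_eq_image] at he
  simpa using Sym2.mem_range_of_mem_image_map he hu

@[simp] theorem inr_inr_not_mem_liftEdgesLeft : s(.inr w, .inr w') ∉ liftEdgesLeft x1 x2 E1 :=
  not_mem_liftEdgesLeft_of_inr_mem (Sym2.mem_mk_left _ _)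

@[simp] theorem inl_inr_not_mem_liftEdgesLeft : s(.inl u, .inr w) ∉ liftEdgesLeft x1 x2 E1 :=
  not_mem_liftEdgesLeft_of_inr_mem (Sym2.mem_mk_right _ _)

@[simp] theorem inl_inl_not_mem_liftEdgesRight :
    s(.inl u, .inl v) ∉ liftEdgesRight V1 x1 x2 E2 :=
  not_mem_liftEdgesRight_of_inl_mem (Sym2.mem_mk_left _ _)

@[simp] theorem inl_inr_not_mem_liftEdgesRight :
    s(.inl u, .inr w) ∉ liftEdgesRight V1 x1 x2 E2 :=
  not_mem_liftEdgesRight_of_inl_mem (Sym2.mem_mk_left _ _)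

theorem liftEdgesRight_union (E F : Set (Sym2 V2)) :
    liftEdgesRight V1 x1 x2 (E ∪ F) = liftEdgesRight V1 x1 x2 E ∪ liftEdgesRight V1 x1 x2 F := by
  simp only [liftEdgesRight_eq_image, Set.preimage_union, Set.image_union]

theorem liftEdgesRight_sdiff {E F : Set (Sym2 V2)} (hF : ∀ e ∈ F, x1 ∈ e ∨ x2 ∈ e) :
    liftEdgesRight V1 x1 x2 (E \ F) = liftEdgesRight V1 x1 x2 E := by
  have hF' : (Sym2.map Subtype.val ⁻¹' F : Set (Sym2 {w : V2 // w ≠ x1 ∧ w ≠ x2})) = ∅ := by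
    ext e
    induction e using Sym2.ind with
    | h p q =>
      simp only [Set.mem_preimage, Sym2.map_mk, Set.mem_empty_iff_false, iff_false]
      intro he
      rcases hF _ he with h | h <;> rcases Sym2.mem_iff.mp h with h | h
      exacts [p.2.1 h.symm, q.2.1 h.symm, p.2.2 h.symm, q.2.2 h.symm]
  rw [liftEdgesRight_eq_image, liftEdgesRight_eq_image, Set.preimage_sdiff, hF', Set.sdiff_empty]

theorem liftEdgesRight_injOn {E F : Set (Sym2 V2)} (hE : ∀ e ∈ E, x1 ∉ e ∧ x2 ∉ e)
    (hF : ∀ e ∈ F, x1 ∉ e ∧ x2 ∉ e)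
    (h : liftEdgesRight V1 x1 x2 E = liftEdgesRight V1 x1 x2 F) : E = F := by
  have hsurj : ∀ E' : Set (Sym2 V2), (∀ e ∈ E', x1 ∉ e ∧ x2 ∉ e) →
      Sym2.map (Subtype.val : {w : V2 // w ≠ x1 ∧ w ≠ x2} → V2) ''
        (Sym2.map Subtype.val ⁻¹' E') = E' := fun E' hE' =>
    Set.image_preimage_eq_of_subset fun e he => Sym2.exists_map_eq_of_forall_mem_range
      fun v hv => ⟨⟨v, fun h => (hE' e he).1 (h ▸ hv), fun h => (hE' e he).2 (h ▸ hv)⟩, rfl⟩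
  rw [liftEdgesRight_eq_image, liftEdgesRight_eq_image,
    (Sym2.map.injective Sum.inr_injective).image_injective.eq_iff] at h
  rw [← hsurj E hE, ← hsurj F hF, h]

theorem exists_mem_liftEdgesRight_iff {X : Set (Sym2 V2)} (hX : ∀ e ∈ X, x1 ∉ e ∧ x2 ∉ e) :
    (∃ e ∈ liftEdgesRight V1 x1 x2 X, .inr w ∈ e) ↔ ∃ e ∈ X, w.1 ∈ e := by
  constructor
  · rintro ⟨e, ⟨p, q, hp, hq, he, rfl⟩, hw⟩
    refine ⟨_, he, ?_⟩
    rcases Sym2.mem_iff.mp hw with h | h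
    exacts [Sym2.mem_iff.mpr (Or.inl (congrArg Subtype.val (Sum.inr.inj h))),
      Sym2.mem_iff.mpr (Or.inr (congrArg Subtype.val (Sum.inr.inj h)))]
  · rintro ⟨e, he, hwe⟩
    obtain ⟨t, het⟩ := Sym2.mem_iff_exists.mp hwe
    rw [het] at he
    have ht : t ≠ x1 ∧ t ≠ x2 :=
      ⟨fun h => (hX _ he).1 (Sym2.mem_iff.mpr (Or.inr h.symm)),
        fun h => (hX _ he).2 (Sym2.mem_iff.mpr (Or.inr h.symm))⟩
    exact ⟨s(.inr w, .inr ⟨t, ht⟩), inr_inr_mem_liftEdgesRight.mpr he, Sym2.mem_mk_left _ _⟩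

@[simp] theorem inr_mem_liftVertsRight {Q : Set V2} :
    (.inr w : DotVert V1 x1 x2) ∈ liftVertsRight V1 x1 x2 Q ↔ w.1 ∈ Q := by
  simp [liftVertsRight]

@[simp] theorem inl_not_mem_liftVertsRight {Q : Set V2} :
    (.inl u : DotVert V1 x1 x2) ∉ liftVertsRight V1 x1 x2 Q := by
  simp [liftVertsRight]

theorem liftVertsRight_union (P Q : Set V2) :
    liftVertsRight V1 x1 x2 (P ∪ Q) = liftVertsRight V1 x1 x2 P ∪ liftVertsRight V1 x1 x2 Q := by
  simp only [liftVertsRight, Set.preimage_union, Set.image_union]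

theorem ncard_liftVertsRight {Q : Set V2} (hx : x1 ∉ Q) (hy : x2 ∉ Q) :
    (liftVertsRight V1 x1 x2 Q).ncard = Q.ncard := by
  rw [liftVertsRight, Set.ncard_image_of_injective _ Sum.inr_injective,
    Set.ncard_preimage_of_injective_subset_range Subtype.val_injective]
  intro v hv
  exact ⟨⟨v, fun h => hx (h ▸ hv), fun h => hy (h ▸ hv)⟩, rfl⟩

theorem Set.Nonempty.of_liftVertsRight {Q : Set V2} (h : (liftVertsRight V1 x1 x2 Q).Nonempty) :
    Q.Nonempty := by
  obtain ⟨_, w, hw, rfl⟩ := h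
  exact ⟨w, hw⟩

theorem liftEdges_union_inter_liftEdges_union {E1 F1 : Set (Sym2 V1)} {E2 F2 : Set (Sym2 V2)}
    (h1 : Disjoint E1 F1) (u1 u2 : V1) (w1 w2 : {w : V2 // w ≠ x1 ∧ w ≠ x2}) :
    (liftEdgesLeft x1 x2 E1 ∪ liftEdgesRight V1 x1 x2 E2) ∩
      (liftEdgesLeft x1 x2 F1 ∪ liftEdgesRight V1 x1 x2 F2 ∪
        ({s(.inl u1, .inr w1)} ∪ {s(.inl u2, .inr w2)})) =
      liftEdgesRight V1 x1 x2 (E2 ∩ F2) := by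
  ext e
  induction e using Sym2.ind with
  | h p q =>
    rcases p with p | p <;> rcases q with q | q
    · simpa using fun hE hF => Set.disjoint_left.mp h1 hE hF
    · simp
    · simp [not_mem_liftEdgesLeft_of_inr_mem (Sym2.mem_mk_left _ _),
        not_mem_liftEdgesRight_of_inl_mem (Sym2.mem_mk_right _ _)]
    · simp

variable {G1 : SimpleGraph V1} {G2 : SimpleGraph V2} {u1 v1 u2 v2 : V1} {y1 y2 z1 z2 : V2}
  {hy1 : y1 ≠ x1 ∧ y1 ≠ x2} {hy2 : y2 ≠ x1 ∧ y2 ≠ x2}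
  {hz1 : z1 ≠ x1 ∧ z1 ≠ x2} {hz2 : z2 ≠ x1 ∧ z2 ≠ x2}

local notation "𝔾" => dotProd G1 G2 u1 v1 u2 v2 x1 x2 y1 y2 z1 z2 hy1 hy2 hz1 hz2

theorem dotProd_adj_inl_inl :
    (𝔾).Adj (.inl u) (.inl v) ↔ G1.Adj u v ∧ s(u, v) ≠ s(u1, v1) ∧ s(u, v) ≠ s(u2, v2) := by
  have hbridge : s((.inl u : DotVert V1 x1 x2), .inl v) ∉
      ({s(.inl u1, .inr ⟨y1, hy1⟩), s(.inl v1, .inr ⟨y2, hy2⟩),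
        s(.inl u2, .inr ⟨z1, hz1⟩), s(.inl v2, .inr ⟨z2, hz2⟩)} :
        Set (Sym2 (DotVert V1 x1 x2))) := by
    simp
  simp only [dotProd, SimpleGraph.fromEdgeSet_adj, Set.mem_union, inl_inl_mem_liftEdgesLeft,
    inl_inl_not_mem_liftEdgesRight, hbridge, or_false, Set.mem_sdiff, Set.mem_insert_iff,
    Set.mem_singleton_iff, SimpleGraph.mem_edgeSet, not_or, ne_eq, Sum.inl.injEq]
  exact ⟨fun ⟨h, _⟩ => h, fun h => ⟨h, h.1.ne⟩⟩

theorem dotProd_adj_inr_inr : (𝔾).Adj (.inr w) (.inr w') ↔ G2.Adj w w' := by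
  simp only [dotProd, SimpleGraph.fromEdgeSet_adj]
  simpa using fun h h' => h.ne (congrArg Subtype.val h')

theorem dotProd_adj_inl_inr :
    (𝔾).Adj (.inl u) (.inr w) ↔ (u = u1 ∧ w.1 = y1) ∨ (u = v1 ∧ w.1 = y2) ∨
      (u = u2 ∧ w.1 = z1) ∨ (u = v2 ∧ w.1 = z2) := by
  simp [dotProd, Subtype.ext_iff]

end DotProduct

section DotMatching

variable {V1 V2 : Type*} {G1 : SimpleGraph V1} {G2 : SimpleGraph V2}
  {M1 : Set (Sym2 V1)} {M2 : Set (Sym2 V2)} {a b a' b' : V1} {x y y1 y2 z1 z2 : V2}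
  {hy1 : y1 ≠ x ∧ y1 ≠ y} {hy2 : y2 ≠ x ∧ y2 ≠ y} {hz1 : z1 ≠ x ∧ z1 ≠ y} {hz2 : z2 ≠ x ∧ z2 ≠ y}
  {c : (G1.deleteEdges M1).ConnectedComponent} {u v : V1} {w w' : {w : V2 // w ≠ x ∧ w ≠ y}}

local notation "Γ" => SimpleGraph.deleteEdges
  (dotProd G1 G2 a b a' b' x y y1 y2 z1 z2 hy1 hy2 hz1 hz2)
  (liftEdgesLeft x y M1 ∪ liftEdgesRight V1 x y (M2 \ {s(x, y)}))

theorem dotProd_deleteEdges_adj_inl_inl : (Γ).Adj (.inl u) (.inl v) ↔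
    (G1.deleteEdges M1).Adj u v ∧ s(u, v) ≠ s(a, b) ∧ s(u, v) ≠ s(a', b') := by
  simp only [SimpleGraph.deleteEdges_adj, dotProd_adj_inl_inl, Set.mem_union,
    inl_inl_mem_liftEdgesLeft, inl_inl_not_mem_liftEdgesRight, or_false]
  tauto

theorem dotProd_deleteEdges_adj_inr_inr :
    (Γ).Adj (.inr w) (.inr w') ↔ (G2.deleteEdges M2).Adj w w' := by
  have hxy : s(w.1, w'.1) ≠ s(x, y) := fun h => by
    rcases Sym2.eq_iff.mp h with ⟨h1, -⟩ | ⟨h1, -⟩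
    exacts [w.2.1 h1, w.2.2 h1]
  simp [SimpleGraph.deleteEdges_adj, dotProd_adj_inr_inr, hxy]

theorem dotProd_deleteEdges_adj_inl_inr : (Γ).Adj (.inl u) (.inr w) ↔
    (u = a ∧ w.1 = y1) ∨ (u = b ∧ w.1 = y2) ∨ (u = a' ∧ w.1 = z1) ∨ (u = b' ∧ w.1 = z2) := by
  simp [SimpleGraph.deleteEdges_adj, dotProd_adj_inl_inr]

open Classical in
/-- Sends each vertex of `G1·G2` to the cycle of `G2∖M2` that its cycle in `G∖M` comes from. -/
noncomputable def dotCycleOf (G2 : SimpleGraph V2) (M2 : Set (Sym2 V2))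
    (c : (G1.deleteEdges M1).ConnectedComponent) :
    DotVert V1 x y → (G2.deleteEdges M2).ConnectedComponent
  | .inl u => (G2.deleteEdges M2).connectedComponentMk (if u ∈ c.supp then x else y)
  | .inr w => (G2.deleteEdges M2).connectedComponentMk w

local notation "π" => dotCycleOf (x := x) (y := y) G2 M2 c

theorem dotCycleOf_eq_of_adj (ha : a ∈ c.supp) (hb : b ∈ c.supp) (ha' : a' ∉ c.supp)
    (hb' : b' ∉ c.supp) (hx : ∀ t, (G2.deleteEdges M2).Adj x t ↔ t = y1 ∨ t = y2)
    (hy : ∀ t, (G2.deleteEdges M2).Adj y t ↔ t = z1 ∨ t = z2) {α β : DotVert V1 x y}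
    (h : (Γ).Adj α β) : π α = π β := by
  have hbridge : ∀ u w, (Γ).Adj (.inl u) (.inr w) →
      π (.inl u) = π (.inr w) := by
    intro u w h
    rcases dotProd_deleteEdges_adj_inl_inr.mp h with ⟨rfl, hw⟩ | ⟨rfl, hw⟩ | ⟨rfl, hw⟩ | ⟨rfl, hw⟩
      <;> simp only [dotCycleOf, ha, hb, ha', hb', if_true, if_false, hw]
    all_goals refine SimpleGraph.ConnectedComponent.connectedComponentMk_eq_of_adj ?_
    exacts [(hx _).mpr (Or.inl rfl), (hx _).mpr (Or.inr rfl), (hy _).mpr (Or.inl rfl),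
      (hy _).mpr (Or.inr rfl)]
  rcases α with u | w <;> rcases β with v | w'
  · have hc : u ∈ c.supp ↔ v ∈ c.supp :=
      c.mem_supp_congr_adj (dotProd_deleteEdges_adj_inl_inl.mp h).1
    by_cases hu : u ∈ c.supp
    · simp only [dotCycleOf, hu, hc.mp hu, if_true]
    · simp only [dotCycleOf, hu, mt hc.mpr hu, if_false]
  · exact hbridge _ _ h
  · exact (hbridge _ _ h.symm).symm
  · exact SimpleGraph.ConnectedComponent.connectedComponentMk_eq_of_adj
      (dotProd_deleteEdges_adj_inr_inr.mp h)

/-- Deleting one edge of a cycle of `G1∖M1` leaves a path between its endpoints, which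
survives in the dot product as long as the two edges removed from `G1` are not on it. -/
theorem dotProd_deleteEdges_reachable_of_adj [Finite V1] (hH : (G1.deleteEdges M1).IsCycles)
    {d : (G1.deleteEdges M1).ConnectedComponent} (huv : (G1.deleteEdges M1).Adj u v)
    (hu : u ∈ d.supp) (hab : s(a, b) = s(u, v) ∨ a ∉ d.supp)
    (ha'b' : s(a', b') = s(u, v) ∨ a' ∉ d.supp) : (Γ).Reachable (.inl u) (.inl v) := by
  have hadj : d.toSimpleGraph.spanningCoe.Adj u v :=
    d.adj_spanningCoe_toSimpleGraph.mpr ⟨hu, huv⟩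
  refine ((hH.toSimpleGraph d).reachable_deleteEdges hadj).map_of_adj
    (f := Sum.inl) fun t t' htt' => ?_
  obtain ⟨htt'', hne⟩ := SimpleGraph.deleteEdges_adj.mp htt'
  obtain ⟨ht, hadj'⟩ := d.adj_spanningCoe_toSimpleGraph.mp htt''
  have ht' : t' ∈ d.supp := d.mem_supp_of_adj_mem_supp ht hadj'
  have hoff : ∀ p q : V1, s(p, q) = s(u, v) ∨ p ∉ d.supp → s(t, t') ≠ s(p, q) := by
    rintro p q (h | h) heq
    · exact hne (heq.trans h)
    · rcases Sym2.eq_iff.mp heq with ⟨rfl, -⟩ | ⟨-, rfl⟩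
      exacts [h ht, h ht']
  exact (dotProd_deleteEdges_adj_inl_inl.mpr ⟨hadj', hoff a b hab, hoff a' b' ha'b'⟩).reachable

theorem dotProd_deleteEdges_reachable_inl (hab : (Γ).Reachable (.inl a) (.inl b))
    (ha'b' : (Γ).Reachable (.inl a') (.inl b')) (h : (G1.deleteEdges M1).Reachable u v) :
    (Γ).Reachable (.inl u) (.inl v) := by
  refine h.map_of_adj fun s t hst => ?_
  by_cases h1 : s(s, t) = s(a, b)
  · rcases Sym2.eq_iff.mp h1 with ⟨rfl, rfl⟩ | ⟨rfl, rfl⟩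
    exacts [hab, hab.symm]
  by_cases h2 : s(s, t) = s(a', b')
  · rcases Sym2.eq_iff.mp h2 with ⟨rfl, rfl⟩ | ⟨rfl, rfl⟩
    exacts [ha'b', ha'b'.symm]
  exact (dotProd_deleteEdges_adj_inl_inl.mpr ⟨hst, h1, h2⟩).reachable

/-- A walk of `G2∖M2` through `x` (resp. `y`) enters and leaves it through `y1, y2` (resp.
`z1, z2`); in the dot product such a visit is replaced by a detour through `G1`. -/
theorem dotProd_deleteEdges_reachable_inr (hxy : x ≠ y)
    (hy12 : (Γ).Reachable (.inr ⟨y1, hy1⟩) (.inr ⟨y2, hy2⟩))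
    (hz12 : (Γ).Reachable (.inr ⟨z1, hz1⟩) (.inr ⟨z2, hz2⟩))
    (hx : ∀ t, (G2.deleteEdges M2).Adj x t → t = y1 ∨ t = y2)
    (hy : ∀ t, (G2.deleteEdges M2).Adj y t → t = z1 ∨ t = z2)
    (h : (G2.deleteEdges M2).Reachable w.1 w'.1) : (Γ).Reachable (.inr w) (.inr w') := by
  classical
  let f : V2 → DotVert V1 x y := fun t =>
    if ht : t ≠ x ∧ t ≠ y then .inr ⟨t, ht⟩ else if t = x then .inr ⟨y1, hy1⟩ else .inr ⟨z1, hz1⟩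
  have hf : ∀ t : {w : V2 // w ≠ x ∧ w ≠ y}, f t.1 = .inr t := fun t => dif_pos t.2
  have hfx : f x = .inr ⟨y1, hy1⟩ := by simp [f]
  have hfy : f y = .inr ⟨z1, hz1⟩ := by simp [f, hxy.symm]
  have hxt : ∀ t, (G2.deleteEdges M2).Adj x t → (Γ).Reachable (f x) (f t) := by
    intro t ht
    rcases hx t ht with rfl | rfl
    · rw [hfx, hf ⟨t, hy1⟩]
    · rw [hfx, hf ⟨t, hy2⟩]
      exact hy12
  have hyt : ∀ t, (G2.deleteEdges M2).Adj y t → (Γ).Reachable (f y) (f t) := by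
    intro t ht
    rcases hy t ht with rfl | rfl
    · rw [hfy, hf ⟨t, hz1⟩]
    · rw [hfy, hf ⟨t, hz2⟩]
      exact hz12
  have hadj : ∀ s t, (G2.deleteEdges M2).Adj s t → (Γ).Reachable (f s) (f t) := by
    intro s t hst
    rcases eq_or_ne s x with rfl | hsx
    · exact hxt t hst
    rcases eq_or_ne t x with rfl | htx
    · exact (hxt s hst.symm).symm
    rcases eq_or_ne s y with rfl | hsy
    · exact hyt t hst
    rcases eq_or_ne t y with rfl | hty
    · exact (hyt s hst.symm).symm
    rw [hf ⟨s, hsx, hsy⟩, hf ⟨t, htx, hty⟩]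
    exact (dotProd_deleteEdges_adj_inr_inr.mpr hst).reachable
  simpa only [hf] using h.map_of_adj hadj

end DotMatching

section DotCycles

variable {V1 V2 : Type*} {G1 : SimpleGraph V1} {G2 : SimpleGraph V2}
  {M1 : Set (Sym2 V1)} {M2 : Set (Sym2 V2)} {a b a' b' : V1} {x y y1 y2 z1 z2 : V2}
  {hy1 : y1 ≠ x ∧ y1 ≠ y} {hy2 : y2 ≠ x ∧ y2 ≠ y} {hz1 : z1 ≠ x ∧ z1 ≠ y} {hz2 : z2 ≠ x ∧ z2 ≠ y}
  {c c' : (G1.deleteEdges M1).ConnectedComponent}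

local notation "Γ" => SimpleGraph.deleteEdges
  (dotProd G1 G2 a b a' b' x y y1 y2 z1 z2 hy1 hy2 hz1 hz2)
  (liftEdgesLeft x y M1 ∪ liftEdgesRight V1 x y (M2 \ {s(x, y)}))
local notation "π" => dotCycleOf (x := x) (y := y) G2 M2 c

theorem dotProd_deleteEdges_exists_reachable_inr (hRab : (Γ).Reachable (.inl a) (.inl b))
    (hRa'b' : (Γ).Reachable (.inl a') (.inl b')) (ha : a ∈ c.supp) (ha' : a' ∈ c'.supp)
    (honly : ∀ d, d = c ∨ d = c') (hxy1 : (G2.deleteEdges M2).Adj x y1)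
    (hyz1 : (G2.deleteEdges M2).Adj y z1) (α : DotVert V1 x y) :
    ∃ w, (Γ).Reachable α (.inr w) ∧ π α = π (.inr w) := by
  have hay1 : (Γ).Adj (.inl a) (.inr ⟨y1, hy1⟩) :=
    dotProd_deleteEdges_adj_inl_inr.mpr (Or.inl ⟨rfl, rfl⟩)
  have ha'z1 : (Γ).Adj (.inl a') (.inr ⟨z1, hz1⟩) :=
    dotProd_deleteEdges_adj_inl_inr.mpr (Or.inr (Or.inr (Or.inl ⟨rfl, rfl⟩)))
  rcases α with u | w
  · by_cases hu : u ∈ c.supp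
    · refine ⟨⟨y1, hy1⟩, (dotProd_deleteEdges_reachable_inl hRab hRa'b'
        (SimpleGraph.ConnectedComponent.exact (hu.trans ha.symm))).trans hay1.reachable, ?_⟩
      simp only [dotCycleOf, hu, if_true]
      exact SimpleGraph.ConnectedComponent.connectedComponentMk_eq_of_adj hxy1
    · have hu' : u ∈ c'.supp := (honly _).resolve_left hu
      refine ⟨⟨z1, hz1⟩, (dotProd_deleteEdges_reachable_inl hRab hRa'b'
        (SimpleGraph.ConnectedComponent.exact (hu'.trans ha'.symm))).trans ha'z1.reachable, ?_⟩
      simp only [dotCycleOf, hu, if_false]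
      exact SimpleGraph.ConnectedComponent.connectedComponentMk_eq_of_adj hyz1
  · exact ⟨w, .rfl, rfl⟩

theorem dotProd_deleteEdges_reachable_iff [Finite V1] (hH : (G1.deleteEdges M1).IsCycles)
    (hab : (G1.deleteEdges M1).Adj a b) (ha'b' : (G1.deleteEdges M1).Adj a' b')
    (ha : a ∈ c.supp) (ha' : a' ∈ c'.supp) (hcc' : c ≠ c') (honly : ∀ d, d = c ∨ d = c')
    (hxy : x ≠ y) (hx : ∀ t, (G2.deleteEdges M2).Adj x t ↔ t = y1 ∨ t = y2)
    (hy : ∀ t, (G2.deleteEdges M2).Adj y t ↔ t = z1 ∨ t = z2) (α β : DotVert V1 x y) :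
    (Γ).Reachable α β ↔ π α = π β := by
  have hc'_c : ∀ {u}, u ∈ c'.supp → u ∉ c.supp := fun hu hu' => hcc' (hu'.symm.trans hu)
  have hRab : (Γ).Reachable (.inl a) (.inl b) :=
    dotProd_deleteEdges_reachable_of_adj hH hab ha (Or.inl rfl) (Or.inr (hc'_c ha'))
  have hRa'b' : (Γ).Reachable (.inl a') (.inl b') :=
    dotProd_deleteEdges_reachable_of_adj hH ha'b' ha'
      (Or.inr fun h => hcc' (ha.symm.trans h)) (Or.inl rfl)
  have hay1 : (Γ).Adj (.inl a) (.inr ⟨y1, hy1⟩) :=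
    dotProd_deleteEdges_adj_inl_inr.mpr (Or.inl ⟨rfl, rfl⟩)
  have hby2 : (Γ).Adj (.inl b) (.inr ⟨y2, hy2⟩) :=
    dotProd_deleteEdges_adj_inl_inr.mpr (Or.inr (Or.inl ⟨rfl, rfl⟩))
  have ha'z1 : (Γ).Adj (.inl a') (.inr ⟨z1, hz1⟩) :=
    dotProd_deleteEdges_adj_inl_inr.mpr (Or.inr (Or.inr (Or.inl ⟨rfl, rfl⟩)))
  have hb'z2 : (Γ).Adj (.inl b') (.inr ⟨z2, hz2⟩) :=
    dotProd_deleteEdges_adj_inl_inr.mpr (Or.inr (Or.inr (Or.inr ⟨rfl, rfl⟩)))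
  have hRy : (Γ).Reachable (.inr ⟨y1, hy1⟩) (.inr ⟨y2, hy2⟩) :=
    hay1.symm.reachable.trans (hRab.trans hby2.reachable)
  have hRz : (Γ).Reachable (.inr ⟨z1, hz1⟩) (.inr ⟨z2, hz2⟩) :=
    ha'z1.symm.reachable.trans (hRa'b'.trans hb'z2.reachable)
  refine ⟨SimpleGraph.Reachable.eq_of_adj fun _ _ => dotCycleOf_eq_of_adj ha
    (c.mem_supp_of_adj_mem_supp ha hab) (hc'_c ha') (hc'_c (c'.mem_supp_of_adj_mem_supp ha' ha'b'))
    hx hy, fun h => ?_⟩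
  have hrep := dotProd_deleteEdges_exists_reachable_inr hRab hRa'b' ha ha' honly
    ((hx _).mpr (Or.inl rfl)) ((hy _).mpr (Or.inl rfl))
  obtain ⟨w, hαw, hπα⟩ := hrep α
  obtain ⟨w', hβw', hπβ⟩ := hrep β
  have hww' := SimpleGraph.ConnectedComponent.exact (hπα.symm.trans (h.trans hπβ))
  exact hαw.trans ((dotProd_deleteEdges_reachable_inr hxy hRy hRz (fun t ht => (hx t).mp ht)
    (fun t ht => (hy t).mp ht) hww').trans hβw'.symm)

/-- The vertices of `G1` attached to a cycle `d` of `G2∖M2` are all of `c` if `x ∈ d` and all of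
its complement if `y ∈ d`; as both are odd, their number has the parity of `|d ∩ {x, y}|`. -/
theorem even_ncard_setOf_dotCycleOf_inl_add [Finite V1] (hxy : x ≠ y) (hc : Odd c.supp.ncard)
    (hcc : Odd c.suppᶜ.ncard) (d : (G2.deleteEdges M2).ConnectedComponent) :
    Even ({u : V1 | π (.inl u) = d}.ncard + (d.supp ∩ {x, y}).ncard) := by
  have hL : {u : V1 | π (.inl u) = d} =
      {u | u ∈ c.supp ∧ x ∈ d.supp ∨ u ∉ c.supp ∧ y ∈ d.supp} := by
    ext u
    by_cases hu : (G1.deleteEdges M1).connectedComponentMk u = c <;> simp [dotCycleOf, hu]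
  have hcard := Set.ncard_add_ncard_compl c.supp
  by_cases hxd : (G2.deleteEdges M2).connectedComponentMk x = d <;>
    by_cases hyd : (G2.deleteEdges M2).connectedComponentMk y = d
  · have hI : d.supp ∩ {x, y} = {x, y} := by ext t; simp; grind
    rw [hL, hI, Set.ncard_pair hxy, show {u | u ∈ c.supp ∧ x ∈ d.supp ∨ u ∉ c.supp ∧ y ∈ d.supp} =
      Set.univ by ext u; simp [hxd, hyd, em], Set.ncard_univ, ← hcard]
    exact (hc.add_odd hcc).add even_two
  · have hI : d.supp ∩ {x, y} = {x} := by ext t; simp; grind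
    rw [hL, hI, Set.ncard_singleton, show {u | u ∈ c.supp ∧ x ∈ d.supp ∨ u ∉ c.supp ∧
      y ∈ d.supp} = c.supp by ext u; simp [hxd, hyd]]
    exact hc.add_one
  · have hI : d.supp ∩ {x, y} = {y} := by ext t; simp; grind
    rw [hL, hI, Set.ncard_singleton, show {u | u ∈ c.supp ∧ x ∈ d.supp ∨ u ∉ c.supp ∧
      y ∈ d.supp} = c.suppᶜ by ext u; simp [hxd, hyd]]
    exact hcc.add_one
  · have hI : d.supp ∩ {x, y} = ∅ := by ext t; simp; grind
    simp [hL, hI, hxd, hyd]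

/-- A fibre of `dotCycleOf` consists of the cycle `d` of `G2∖M2` without `x` and `y`, together
with the vertices of `G1` attached to `d`. -/
theorem odd_ncard_preimage_dotCycleOf_iff [Finite V1] [Finite V2] (hxy : x ≠ y)
    (hc : Odd c.supp.ncard) (hcc : Odd c.suppᶜ.ncard) (d : (G2.deleteEdges M2).ConnectedComponent) :
    Odd (π ⁻¹' {d}).ncard ↔ Odd d.supp.ncard := by
  have hsplit : (π ⁻¹' {d}).ncard = {u : V1 | π (.inl u) = d}.ncard +
      (Subtype.val ⁻¹' d.supp : Set {w : V2 // w ≠ x ∧ w ≠ y}).ncard :=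
    Set.ncard_eq_ncard_preimage_inl_add_ncard_preimage_inr _
  have hR := Set.ncard_preimage_val_add_ncard_inter_pair (x := x) (y := y) d.supp
  have hL := Nat.even_iff.mp (even_ncard_setOf_dotCycleOf_inl_add hxy hc hcc d)
  rw [hsplit, ← hR, Nat.odd_iff, Nat.odd_iff]
  omega

theorem incVerts_preimage_dotCycleOf {X : Set (Sym2 V2)} (hX : ∀ e ∈ X, x ∉ e ∧ y ∉ e)
    (d : (G2.deleteEdges M2).ConnectedComponent) :
    incVerts (π ⁻¹' {d}) (liftEdgesRight V1 x y X) = liftVertsRight V1 x y (incVerts d.supp X) := by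
  ext (u | w)
  · simp only [incVerts, Set.mem_ofPred_eq, inl_not_mem_liftVertsRight, iff_false, not_and]
    exact fun _ ⟨e, he, hu⟩ => not_mem_liftEdgesRight_of_inl_mem hu he
  · simp only [incVerts, Set.mem_ofPred_eq, inr_mem_liftVertsRight,
      exists_mem_liftEdgesRight_iff hX]
    rfl

end DotCycles

section FFamily

variable {V1 V2 : Type*} {x y : V2} {G : SimpleGraph (DotVert V1 x y)}
  {M : Set (Sym2 (DotVert V1 x y))} {G2 : SimpleGraph V2} {M2 : Set (Sym2 V2)}

theorem Disjoint.liftEdgesRight {E F : Set (Sym2 V2)} (h : Disjoint E F) :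
    Disjoint (liftEdgesRight V1 x y E) (liftEdgesRight V1 x y F) := by
  rw [liftEdgesRight_eq_image, liftEdgesRight_eq_image]
  exact (Set.disjoint_image_iff (Sym2.map.injective Sum.inr_injective)).mpr (h.preimage _)

theorem not_mem_incVerts {S : Set V2} {X : Set (Sym2 V2)} {v : V2} (hv : ∀ e ∈ X, v ∉ e) :
    v ∉ incVerts S X :=
  fun ⟨_, e, he, hve⟩ => hv e he hve

theorem ncard_liftVertsRight_incVerts {T : Set V2} {X : Set (Sym2 V2)}
    (hX : ∀ e ∈ X, x ∉ e ∧ y ∉ e) :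
    (liftVertsRight V1 x y (incVerts T X)).ncard = (incVerts T X).ncard :=
  ncard_liftVertsRight (not_mem_incVerts fun e he => (hX e he).1)
    (not_mem_incVerts fun e he => (hX e he).2)

theorem exists_lift_of_sym2Disjoint
    (hadj : ∀ p q : {w : V2 // w ≠ x ∧ w ≠ y}, G2.Adj p q → G.Adj (.inr p) (.inr q))
    {I : Set V2} (hx : x ∉ I) (hy : y ∉ I) {e1 e2 : Sym2 V2} (he1 : e1 ∈ G2.edgeSet)
    (he2 : e2 ∈ G2.edgeSet) (hne : e1 ≠ e2) (hdisj : Sym2Disjoint e1 e2)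
    (hcov : ∀ v, (v ∈ e1 ∨ v ∈ e2) ↔ v ∈ I) :
    ∃ f1 f2 : Sym2 (DotVert V1 x y), f1 ∈ G.edgeSet ∧ f2 ∈ G.edgeSet ∧ f1 ≠ f2 ∧
      Sym2Disjoint f1 f2 ∧ ∀ α, (α ∈ f1 ∨ α ∈ f2) ↔ α ∈ liftVertsRight V1 x y I := by
  have hval : ∀ {f : Sym2 {w : V2 // w ≠ x ∧ w ≠ y}} {t}, t.1 ∈ Sym2.map Subtype.val f ↔ t ∈ f :=
    Sym2.mem_map_iff_of_injective Subtype.val_injective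
  have hinr : ∀ {f : Sym2 {w : V2 // w ≠ x ∧ w ≠ y}} {t},
      (.inr t : DotVert V1 x y) ∈ Sym2.map Sum.inr f ↔ t ∈ f :=
    Sym2.mem_map_iff_of_injective Sum.inr_injective
  have hlift : ∀ e : Sym2 V2, (∀ v ∈ e, v ∈ I) →
      ∃ f : Sym2 {w : V2 // w ≠ x ∧ w ≠ y}, Sym2.map Subtype.val f = e := fun e h =>
    Sym2.exists_map_eq_of_forall_mem_range fun v hv =>
      ⟨⟨v, fun h' => hx (h' ▸ h v hv), fun h' => hy (h' ▸ h v hv)⟩, rfl⟩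
  obtain ⟨f1, rfl⟩ := hlift e1 fun v hv => (hcov v).mp (Or.inl hv)
  obtain ⟨f2, rfl⟩ := hlift e2 fun v hv => (hcov v).mp (Or.inr hv)
  have hedge : ∀ f : Sym2 {w : V2 // w ≠ x ∧ w ≠ y}, Sym2.map Subtype.val f ∈ G2.edgeSet →
      Sym2.map Sum.inr f ∈ G.edgeSet := by
    intro f hf
    induction f using Sym2.ind with
    | h p q => exact hadj p q hf
  have hinl : ∀ (u : V1) (f : Sym2 {w : V2 // w ≠ x ∧ w ≠ y}), .inl u ∉ Sym2.map Sum.inr f := by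
    simp [Sym2.mem_map]
  refine ⟨_, _, hedge _ he1, hedge _ he2,
    fun h => hne (congrArg _ (Sym2.map.injective Sum.inr_injective h)), ?_, ?_⟩
  · rintro (u | t) h1 h2
    · exact hinl u _ h1
    · exact hdisj t.1 (hval.mpr (hinr.mp h1)) (hval.mpr (hinr.mp h2))
  · rintro (u | t)
    · simp only [hinl, or_self, inl_not_mem_liftVertsRight]
    · rw [hinr, hinr, inr_mem_liftVertsRight, ← hcov, hval, hval]

variable (G M G2 M2) in
def CyclesLiftFrom : Prop :=
  ∀ S, IsCycleOf G M S → ∃ T, IsCycleOf G2 M2 T ∧ (Odd S.ncard ↔ Odd T.ncard) ∧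
    ∀ X : Set (Sym2 V2), (∀ e ∈ X, x ∉ e ∧ y ∉ e) →
      incVerts S (liftEdgesRight V1 x y X) = liftVertsRight V1 x y (incVerts T X)

theorem isFFamily_liftEdgesRight {A B C D : Set (Sym2 V2)} (hFam : IsFFamily G2 M2 A B C D)
    (hbal : ∀ X ∈ ({A, B, C, D} : Set (Set (Sym2 V2))),
      IsBalancedMatching G M (liftEdgesRight V1 x y X))
    (havoid : ∀ e ∈ A ∪ B ∪ C ∪ D, x ∉ e ∧ y ∉ e)
    (hadj : ∀ p q : {w : V2 // w ≠ x ∧ w ≠ y}, G2.Adj p q → G.Adj (.inr p) (.inr q))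
    (hcyc : CyclesLiftFrom G M G2 M2) :
    IsFFamily G M (liftEdgesRight V1 x y A) (liftEdgesRight V1 x y B)
      (liftEdgesRight V1 x y C) (liftEdgesRight V1 x y D) := by
  obtain ⟨-, hdisj, hodd, heven, hcov⟩ := hFam
  have himage : ({liftEdgesRight V1 x y A, liftEdgesRight V1 x y B, liftEdgesRight V1 x y C,
      liftEdgesRight V1 x y D} : Set (Set (Sym2 (DotVert V1 x y)))) =
      liftEdgesRight V1 x y '' {A, B, C, D} := by
    simp only [Set.image_insert_eq, Set.image_singleton]
  have hXavoid : ∀ X ∈ ({A, B, C, D} : Set (Set (Sym2 V2))), ∀ e ∈ X, x ∉ e ∧ y ∉ e :=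
    fun X hX e he => havoid e (Set.subset_union_of_mem_insert4 hX he)
  have hU : liftEdgesRight V1 x y A ∪ liftEdgesRight V1 x y B ∪ liftEdgesRight V1 x y C ∪
      liftEdgesRight V1 x y D = liftEdgesRight V1 x y (A ∪ B ∪ C ∪ D) := by
    simp only [liftEdgesRight_union]
  refine ⟨?_, ?_, ?_, ?_, ?_⟩
  · rw [himage]
    exact Set.forall_mem_image.mpr hbal
  · exact List.pairwise_map.mpr (hdisj.imp (Disjoint.liftEdgesRight (V1 := V1) (x := x) (y := y)))
  · intro S hS hSodd X' hX'
    obtain ⟨T, hT, hpar, hinc⟩ := hcyc S hS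
    rw [himage] at hX'
    obtain ⟨X, hX, rfl⟩ := hX'
    rw [hinc X (hXavoid X hX), ncard_liftVertsRight_incVerts (hXavoid X hX)]
    exact hodd T hT (hpar.mp hSodd) X hX
  · intro S hS hSeven hne
    obtain ⟨T, hT, hpar, hinc⟩ := hcyc S hS
    have hTeven : Even T.ncard :=
      Nat.not_odd_iff_even.mp (hpar.not.mp (Nat.not_odd_iff_even.mpr hSeven))
    rw [hU, hinc _ havoid] at hne ⊢
    obtain ⟨h4, hstruct⟩ := heven T hT hTeven hne.of_liftVertsRight
    refine ⟨(ncard_liftVertsRight_incVerts havoid).trans h4, ?_⟩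
    rw [himage]
    rcases hstruct with ⟨X, hX, hXeq⟩ | ⟨X, hX, Y, hY, hXY, hcX, hcY, hXYeq⟩
    · exact Or.inl ⟨_, Set.mem_image_of_mem _ hX, by rw [hinc X (hXavoid X hX), hXeq]⟩
    · refine Or.inr ⟨_, Set.mem_image_of_mem _ hX, _, Set.mem_image_of_mem _ hY,
        fun h => hXY (liftEdgesRight_injOn (hXavoid X hX) (hXavoid Y hY) h), ?_, ?_, ?_⟩
      · rwa [hinc X (hXavoid X hX), ncard_liftVertsRight_incVerts (hXavoid X hX)]
      · rwa [hinc Y (hXavoid Y hY), ncard_liftVertsRight_incVerts (hXavoid Y hY)]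
      · rw [hinc X (hXavoid X hX), hinc Y (hXavoid Y hY), hXYeq, liftVertsRight_union]
  · intro S hS hne
    obtain ⟨T, hT, -, hinc⟩ := hcyc S hS
    rw [hU, hinc _ havoid] at hne ⊢
    obtain ⟨e1, e2, he1, he2, hne12, hdisj12, hcov12⟩ := hcov T hT hne.of_liftVertsRight
    exact exists_lift_of_sym2Disjoint hadj (not_mem_incVerts fun e he => (havoid e he).1)
      (not_mem_incVerts fun e he => (havoid e he).2) he1 he2 hne12 hdisj12 hcov12

theorem IsFFamily.union_subset {G' : SimpleGraph V2} {M' A B C D : Set (Sym2 V2)}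
    (hFam : IsFFamily G' M' A B C D) : A ∪ B ∪ C ∪ D ⊆ M' := by
  have hsub : ∀ X ∈ ({A, B, C, D} : Set (Set (Sym2 V2))), X ⊆ M' := fun X hX => by
    obtain ⟨M', -, rfl⟩ := hFam.1 X hX
    exact Set.inter_subset_left
  simp only [Set.union_subset_iff]
  exact ⟨⟨⟨hsub A (by simp), hsub B (by simp)⟩, hsub C (by simp)⟩, hsub D (by simp)⟩

end FFamily

section DotPerfectMatching

variable {V1 V2 : Type*} {G1 : SimpleGraph V1} {G2 : SimpleGraph V2}
  {u1 v1 u2 v2 : V1} {x1 x2 y1 y2 z1 z2 : V2}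
  {hy1 : y1 ≠ x1 ∧ y1 ≠ x2} {hy2 : y2 ≠ x1 ∧ y2 ≠ x2}
  {hz1 : z1 ≠ x1 ∧ z1 ≠ x2} {hz2 : z2 ≠ x1 ∧ z2 ≠ x2}

local notation "𝔾" => dotProd G1 G2 u1 v1 u2 v2 x1 x2 y1 y2 z1 z2 hy1 hy2 hz1 hz2

theorem IsPerfectMatchingOn.liftEdgesLeft {N : Set (Sym2 V1)} {S : Set V1}
    (hN : IsPerfectMatchingOn G1 N S) (h1 : s(u1, v1) ∉ N) (h2 : s(u2, v2) ∉ N) :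
    IsPerfectMatchingOn 𝔾 (liftEdgesLeft x1 x2 N) (Sum.inl '' S) := by
  refine hN.image_map Sum.inl_injective fun e he => ?_
  induction e using Sym2.ind with
  | h p q =>
    exact dotProd_adj_inl_inl.mpr ⟨hN.1.1 he, fun h => h1 (h ▸ he), fun h => h2 (h ▸ he)⟩

theorem IsPerfectMatchingOn.liftEdgesRight {N : Set (Sym2 V2)} {S : Set V2}
    (hN : IsPerfectMatchingOn G2 N S) (hx : x1 ∉ S) (hy : x2 ∉ S) :
    IsPerfectMatchingOn 𝔾 (liftEdgesRight V1 x1 x2 N) (liftVertsRight V1 x1 x2 S) := by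
  rw [liftEdgesRight_eq_image]
  refine (hN.preimage_map Subtype.val_injective fun v hv =>
    ⟨⟨v, fun h => hx (h ▸ hv), fun h => hy (h ▸ hv)⟩, rfl⟩).image_map Sum.inr_injective
    fun e he => ?_
  induction e using Sym2.ind with
  | h p q => exact dotProd_adj_inr_inr.mpr (hN.1.1 he)

end DotPerfectMatching

section DotFFamily

variable {V1 V2 : Type*} {G1 : SimpleGraph V1} {G2 : SimpleGraph V2}
  {M1 : Set (Sym2 V1)} {M2 : Set (Sym2 V2)} {a b a' b' : V1} {x y y1 y2 z1 z2 : V2}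
  {hy1 : y1 ≠ x ∧ y1 ≠ y} {hy2 : y2 ≠ x ∧ y2 ≠ y} {hz1 : z1 ≠ x ∧ z1 ≠ y} {hz2 : z2 ≠ x ∧ z2 ≠ y}
  {c c' : (G1.deleteEdges M1).ConnectedComponent}

local notation "𝔾" => dotProd G1 G2 a b a' b' x y y1 y2 z1 z2 hy1 hy2 hz1 hz2
local notation "𝕄" => liftEdgesLeft x y M1 ∪ liftEdgesRight V1 x y (M2 \ {s(x, y)})

theorem isPerfectMatchingSet_dotMatching (hM1 : IsPerfectMatchingSet G1 M1)
    (hab : s(a, b) ∉ M1) (ha'b' : s(a', b') ∉ M1) (hM2 : IsPerfectMatchingSet G2 M2)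
    (hxy : s(x, y) ∈ M2) : IsPerfectMatchingSet 𝔾 𝕄 := by
  rw [isPerfectMatchingSet_iff_isPerfectMatchingOn_univ] at hM1 hM2 ⊢
  have hL := hM1.liftEdgesLeft (x1 := x) (x2 := y) (G2 := G2) (hy1 := hy1) (hy2 := hy2)
    (hz1 := hz1) (hz2 := hz2) hab ha'b'
  have hR := (hM2.sdiff_singleton hxy).liftEdgesRight (G1 := G1) (u1 := a) (v1 := b)
    (u2 := a') (v2 := b') (hy1 := hy1) (hy2 := hy2) (hz1 := hz1) (hz2 := hz2)
    (by simp) (by simp)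
  convert hL.union hR (Set.disjoint_left.mpr ?_) using 1
  · ext (u | w)
    · simp
    · simp [liftVertsRight, w.2.1, w.2.2]
  · rintro _ ⟨u, -, rfl⟩
    exact inl_not_mem_liftVertsRight

theorem isPerfectMatchingSet_dotProd_of_bridges {N1 : Set (Sym2 V1)} {N2 : Set (Sym2 V2)}
    {u1 u2 : V1} {w1 w2 : {w : V2 // w ≠ x ∧ w ≠ y}} (hN1 : IsPerfectMatchingOn G1 N1 {u1, u2}ᶜ)
    (hab : s(a, b) ∉ N1) (ha'b' : s(a', b') ∉ N1)
    (hN2 : IsPerfectMatchingOn G2 N2 {x, y, w1.1, w2.1}ᶜ)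
    (h1 : (𝔾).Adj (.inl u1) (.inr w1)) (h2 : (𝔾).Adj (.inl u2) (.inr w2)) (hu : u1 ≠ u2)
    (hw : w1 ≠ w2) :
    IsPerfectMatchingSet 𝔾 (liftEdgesLeft x y N1 ∪ liftEdgesRight V1 x y N2 ∪
      ({s(.inl u1, .inr w1)} ∪ {s(.inl u2, .inr w2)})) := by
  have hL := hN1.liftEdgesLeft (x1 := x) (x2 := y) (G2 := G2) (hy1 := hy1) (hy2 := hy2)
    (hz1 := hz1) (hz2 := hz2) hab ha'b'
  have hR := hN2.liftEdgesRight (G1 := G1) (u1 := a) (v1 := b) (u2 := a') (v2 := b')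
    (hy1 := hy1) (hy2 := hy2) (hz1 := hz1) (hz2 := hz2) (by simp) (by simp)
  have hB := (isPerfectMatchingOn_singleton (SimpleGraph.mem_edgeSet _ |>.mpr h1)).union
    (isPerfectMatchingOn_singleton (SimpleGraph.mem_edgeSet _ |>.mpr h2))
    (Set.disjoint_left.mpr <| by rintro (u | w) <;> simp_all [Subtype.ext_iff])
  rw [isPerfectMatchingSet_iff_isPerfectMatchingOn_univ]
  convert (hL.union hR (Set.disjoint_left.mpr ?_)).union hB (Set.disjoint_left.mpr ?_) using 1
  · ext (u | w)
    · by_cases h : u = u1 ∨ u = u2 <;> simp_all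
    · by_cases h : w = w1 ∨ w = w2 <;> simp_all [liftVertsRight, Subtype.ext_iff, w.2.1, w.2.2]
  · rintro _ ⟨u, -, rfl⟩
    exact inl_not_mem_liftVertsRight
  · rintro (u | w) hL' hB'
    · simp_all
    · simp_all [liftVertsRight, Subtype.ext_iff]

theorem exists_isPerfectMatchingOn_compl_of_mem_cycleEdges [Finite V1]
    (hH : (G1.deleteEdges M1).IsCycles) (he1 : s(a, b) ∈ cycleEdges G1 M1 c.supp)
    (he2 : s(a', b') ∈ cycleEdges G1 M1 c'.supp) (hcc' : c ≠ c') (honly : ∀ d, d = c ∨ d = c')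
    (hc : Odd c.supp.ncard) (hc' : Odd c'.supp.ncard) {u1 u2 : V1} (hu1 : u1 ∈ s(a, b))
    (hu2 : u2 ∈ s(a', b')) :
    ∃ N1, IsPerfectMatchingOn (G1.deleteEdges M1) N1 {u1, u2}ᶜ ∧ s(a, b) ∉ N1 ∧ s(a', b') ∉ N1 := by
  have hn : ∀ {p q u : V1}, u ∈ s(p, q) → (G1.deleteEdges M1).Adj p q →
      ((G1.deleteEdges M1).neighborSet u).Nonempty := by
    intro p q u hu hpq
    rcases Sym2.mem_iff.mp hu with rfl | rfl
    exacts [⟨q, hpq⟩, ⟨p, hpq.symm⟩]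
  obtain ⟨N1, hN1⟩ := hH.exists_isPerfectMatchingOn_compl_pair hcc' honly hc hc'
    (he1.2.2 u1 hu1) (he2.2.2 u2 hu2) (hn hu1 (adj_of_mem_cycleEdges he1))
    (hn hu2 (adj_of_mem_cycleEdges he2))
  exact ⟨N1, hN1, fun h => (hN1.2 u1).mp ⟨_, h, hu1⟩ (by simp),
    fun h => (hN1.2 u2).mp ⟨_, h, hu2⟩ (by simp)⟩

theorem isBalancedMatching_dotMatching [Finite V1] (hH : (G1.deleteEdges M1).IsCycles)
    (he1 : s(a, b) ∈ cycleEdges G1 M1 c.supp) (he2 : s(a', b') ∈ cycleEdges G1 M1 c'.supp)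
    (hcc' : c ≠ c') (honly : ∀ d, d = c ∨ d = c') (hc : Odd c.supp.ncard)
    (hc' : Odd c'.supp.ncard) (hxy : s(x, y) ∈ M2) (hNx : G2.neighborSet x = {y1, y2, y})
    (hNy : G2.neighborSet y = {z1, z2, x}) {X : Set (Sym2 V2)}
    (hX : IsBalancedMatching G2 M2 X) (hxyX : s(x, y) ∉ X) :
    IsBalancedMatching 𝔾 𝕄 (liftEdgesRight V1 x y X) := by
  obtain ⟨M', hM', rfl⟩ := hX
  have hxy' : x ≠ y := (show G2.Adj x y by simp [← SimpleGraph.mem_neighborSet, hNx]).ne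
  obtain ⟨t1, ht1, hxt1⟩ :=
    hM'.exists_partner_of_neighborSet_eq hNx fun h => hxyX ⟨hxy, h⟩
  obtain ⟨t2, ht2, hyt2⟩ :=
    hM'.exists_partner_of_neighborSet_eq hNy fun h => hxyX ⟨hxy, by rwa [Sym2.eq_swap]⟩
  obtain ⟨u1, w1, hu1, rfl, hbr1⟩ : ∃ (u1 : V1) (w1 : {w : V2 // w ≠ x ∧ w ≠ y}),
      u1 ∈ s(a, b) ∧ w1.1 = t1 ∧ (𝔾).Adj (.inl u1) (.inr w1) := by
    rcases ht1 with rfl | rfl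
    exacts [⟨a, ⟨_, hy1⟩, by simp, rfl, dotProd_adj_inl_inr.mpr (Or.inl ⟨rfl, rfl⟩)⟩,
      ⟨b, ⟨_, hy2⟩, by simp, rfl, dotProd_adj_inl_inr.mpr (Or.inr (Or.inl ⟨rfl, rfl⟩))⟩]
  obtain ⟨u2, w2, hu2, rfl, hbr2⟩ : ∃ (u2 : V1) (w2 : {w : V2 // w ≠ x ∧ w ≠ y}),
      u2 ∈ s(a', b') ∧ w2.1 = t2 ∧ (𝔾).Adj (.inl u2) (.inr w2) := by
    rcases ht2 with rfl | rfl
    exacts [⟨a', ⟨_, hz1⟩, by simp, rfl,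
        dotProd_adj_inl_inr.mpr (Or.inr (Or.inr (Or.inl ⟨rfl, rfl⟩)))⟩,
      ⟨b', ⟨_, hz2⟩, by simp, rfl,
        dotProd_adj_inl_inr.mpr (Or.inr (Or.inr (Or.inr ⟨rfl, rfl⟩)))⟩]
  obtain ⟨N1, hN1, hN1ab, hN1a'b'⟩ := exists_isPerfectMatchingOn_compl_of_mem_cycleEdges hH he1
    he2 hcc' honly hc hc' hu1 hu2
  have hne : s(y, w2.1) ≠ s(x, w1.1) := fun h => by
    rcases Sym2.eq_iff.mp h with ⟨h, -⟩ | ⟨h, -⟩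
    exacts [hxy' h.symm, w1.2.2 h.symm]
  have hu12 : u1 ≠ u2 := fun h => hcc' ((he1.2.2 u1 hu1).symm.trans (h ▸ he2.2.2 u2 hu2))
  have hw12 : w1 ≠ w2 := fun h => hxy' (hM'.eq_of_mem (by rwa [Sym2.eq_swap])
    (by rw [h, Sym2.eq_swap]; exact hyt2))
  refine ⟨_, isPerfectMatchingSet_dotProd_of_bridges (hN1.mono (SimpleGraph.deleteEdges_le _))
    hN1ab hN1a'b' (hM'.isPerfectMatchingOn_sdiff_pair hxt1 hyt2 hne) hbr1 hbr2 hu12 hw12, ?_⟩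
  rw [liftEdgesRight_sdiff (F := {s(x, y)}) (by simp),
    liftEdgesRight_sdiff (F := {s(y, w2.1)}) (by simp),
    liftEdgesRight_sdiff (F := {s(x, w1.1)}) (by simp)]
  exact (liftEdges_union_inter_liftEdges_union (Set.disjoint_right.mpr fun e he hM1 =>
    (SimpleGraph.edgeSet_deleteEdges M1 ▸ hN1.1.1 he).2 hM1) _ _ _ _).symm

theorem cyclesLiftFrom_dotProd [Finite V1] [Finite V2]
    (hH : (G1.deleteEdges M1).IsCycles) (hab : (G1.deleteEdges M1).Adj a b)
    (ha'b' : (G1.deleteEdges M1).Adj a' b') (ha : a ∈ c.supp) (ha' : a' ∈ c'.supp)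
    (hcc' : c ≠ c') (honly : ∀ d, d = c ∨ d = c') (hc : Odd c.supp.ncard)
    (hc' : Odd c'.supp.ncard) (hxy : x ≠ y)
    (hx : ∀ t, (G2.deleteEdges M2).Adj x t ↔ t = y1 ∨ t = y2)
    (hy : ∀ t, (G2.deleteEdges M2).Adj y t ↔ t = z1 ∨ t = z2) :
    CyclesLiftFrom 𝔾 𝕄 G2 M2 := by
  rintro _ ⟨K, rfl⟩
  obtain ⟨d, hd⟩ := K.exists_supp_eq_preimage
    (dotProd_deleteEdges_reachable_iff hH hab ha'b' ha ha' hcc' honly hxy hx hy)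
  have hcompl : c.suppᶜ = c'.supp := by
    ext u
    exact ⟨fun hu => (honly _).resolve_left hu, fun hu hu' => hcc' (hu'.symm.trans hu)⟩
  refine ⟨d.supp, ⟨d, rfl⟩, ?_, fun X hX => ?_⟩
  · rw [hd]
    exact odd_ncard_preimage_dotCycleOf_iff hxy hc (hcompl ▸ hc') d
  · rw [hd]
    exact incVerts_preimage_dotCycleOf hX d

end DotFFamily

theorem stmt_12_general {V1 V2 : Type*} [Fintype V1] [Fintype V2]
    (G1 : SimpleGraph V1) (G2 : SimpleGraph V2)
    (hG1 : IsSnark G1)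
    (M1 : Set (Sym2 V1)) (hM1 : IsPerfectMatchingSet G1 M1)
    (c c' : (G1.deleteEdges M1).ConnectedComponent) (hcc' : c ≠ c')
    (honly : ∀ d : (G1.deleteEdges M1).ConnectedComponent, d = c ∨ d = c')
    (hcodd : Odd c.supp.ncard) (hc'odd : Odd c'.supp.ncard)
    (a b a' b' : V1)
    (he1 : s(a, b) ∈ cycleEdges G1 M1 c.supp)
    (he2 : s(a', b') ∈ cycleEdges G1 M1 c'.supp)
    (M2 : Set (Sym2 V2)) (hM2 : IsPerfectMatchingSet G2 M2)
    (A B C D : Set (Sym2 V2)) (hFam : IsFFamily G2 M2 A B C D)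
    (x y : V2) (he3 : s(x, y) ∈ M2) (he3F : s(x, y) ∉ A ∪ B ∪ C ∪ D)
    (y1 y2 z1 z2 : V2)
    (hNx : G2.neighborSet x = {y1, y2, y}) (hNy : G2.neighborSet y = {z1, z2, x})
    (hy1 : y1 ≠ x ∧ y1 ≠ y) (hy2 : y2 ≠ x ∧ y2 ≠ y)
    (hz1 : z1 ≠ x ∧ z1 ≠ y) (hz2 : z2 ≠ x ∧ z2 ≠ y) :
    IsPerfectMatchingSet (dotProd G1 G2 a b a' b' x y y1 y2 z1 z2 hy1 hy2 hz1 hz2)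
      (liftEdgesLeft x y M1 ∪ liftEdgesRight V1 x y (M2 \ {s(x, y)})) ∧
    IsFFamily (dotProd G1 G2 a b a' b' x y y1 y2 z1 z2 hy1 hy2 hz1 hz2)
      (liftEdgesLeft x y M1 ∪ liftEdgesRight V1 x y (M2 \ {s(x, y)}))
      (liftEdgesRight V1 x y A) (liftEdgesRight V1 x y B)
      (liftEdgesRight V1 x y C) (liftEdgesRight V1 x y D) := by
  have hH := hM1.isCycles_deleteEdges hG1.1
  have hxy : x ≠ y := (hM2.1.1 he3).ne
  have hx : ∀ t, (G2.deleteEdges M2).Adj x t ↔ t = y1 ∨ t = y2 := fun t =>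
    hM2.deleteEdges_adj_iff_of_neighborSet_eq hNx he3 hy1.2 hy2.2
  have hy : ∀ t, (G2.deleteEdges M2).Adj y t ↔ t = z1 ∨ t = z2 := fun t =>
    hM2.deleteEdges_adj_iff_of_neighborSet_eq hNy (by rwa [Sym2.eq_swap]) hz1.1 hz2.1
  have havoid : ∀ e ∈ A ∪ B ∪ C ∪ D, x ∉ e ∧ y ∉ e := fun e he => by
    have hne : e ≠ s(x, y) := fun h => he3F (h ▸ he)
    exact ⟨fun hx => hM2.1.2 (hFam.union_subset he) he3 hne x hx (Sym2.mem_mk_left _ _),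
      fun hy => hM2.1.2 (hFam.union_subset he) he3 hne y hy (Sym2.mem_mk_right _ _)⟩
  have hbal : ∀ X ∈ ({A, B, C, D} : Set (Set (Sym2 V2))), IsBalancedMatching
      (dotProd G1 G2 a b a' b' x y y1 y2 z1 z2 hy1 hy2 hz1 hz2)
      (liftEdgesLeft x y M1 ∪ liftEdgesRight V1 x y (M2 \ {s(x, y)}))
      (liftEdgesRight V1 x y X) := fun X hX =>
    isBalancedMatching_dotMatching hH he1 he2 hcc' honly hcodd hc'odd he3 hNx hNy
      (hFam.1 X hX) fun h => he3F (Set.subset_union_of_mem_insert4 hX h)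
  have hcyc := cyclesLiftFrom_dotProd (hy1 := hy1) (hy2 := hy2) (hz1 := hz1) (hz2 := hz2) hH
    (adj_of_mem_cycleEdges he1) (adj_of_mem_cycleEdges he2) (he1.2.2 a (Sym2.mem_mk_left _ _))
    (he2.2.2 a' (Sym2.mem_mk_left _ _)) hcc' honly hcodd hc'odd hxy hx hy
  exact ⟨isPerfectMatchingSet_dotMatching hM1 he1.2.1 he2.2.1 hM2 he3,
    isFFamily_liftEdgesRight hFam hbal havoid (fun p q h => dotProd_adj_inr_inr.mpr h) hcyc⟩

/-- Let `G1` be a snark with a perfect matching `M1` such that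
`G1∖M1` consists of exactly two odd cycles `C`, `C'`, and let `e1 = ab` be an edge of
`C` and `e2 = a'b'` an edge of `C'`. Let `G2` be a snark with a perfect matching `M2`
and an F-family `{A, B, C, D}` for `M2`, and let `e3 = xy` be an edge of
`M2 ∖ (A ∪ B ∪ C ∪ D)` whose endpoints lie on two distinct odd cycles of `G2∖M2`. Then
in the dot product `G = G1·G2` (formed using `e1, e2` and `e3`), the set
`M = M1 ∪ (M2 ∖ {xy})` is a perfect matching and `{A, B, C, D}` is an F-family
for `M`. -/
theorem stmt_12 {V1 V2 : Type*} [Fintype V1] [Fintype V2]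
    (G1 : SimpleGraph V1) (G2 : SimpleGraph V2)
    (hG1 : IsSnark G1) (hG2 : IsSnark G2)
    (M1 : Set (Sym2 V1)) (hM1 : IsPerfectMatchingSet G1 M1)
    (c c' : (G1.deleteEdges M1).ConnectedComponent) (hcc' : c ≠ c')
    (honly : ∀ d : (G1.deleteEdges M1).ConnectedComponent, d = c ∨ d = c')
    (hcodd : Odd c.supp.ncard) (hc'odd : Odd c'.supp.ncard)
    (a b a' b' : V1)
    (he1 : s(a, b) ∈ cycleEdges G1 M1 c.supp)
    (he2 : s(a', b') ∈ cycleEdges G1 M1 c'.supp)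
    (M2 : Set (Sym2 V2)) (hM2 : IsPerfectMatchingSet G2 M2)
    (A B C D : Set (Sym2 V2)) (hFam : IsFFamily G2 M2 A B C D)
    (x y : V2) (he3 : s(x, y) ∈ M2) (he3F : s(x, y) ∉ A ∪ B ∪ C ∪ D)
    (d1 d2 : (G2.deleteEdges M2).ConnectedComponent) (hd12 : d1 ≠ d2)
    (hd1odd : Odd d1.supp.ncard) (hd2odd : Odd d2.supp.ncard)
    (hxd : x ∈ d1.supp) (hyd : y ∈ d2.supp)
    (y1 y2 z1 z2 : V2)
    (hNx : G2.neighborSet x = {y1, y2, y}) (hNy : G2.neighborSet y = {z1, z2, x})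
    (hy1 : y1 ≠ x ∧ y1 ≠ y) (hy2 : y2 ≠ x ∧ y2 ≠ y) (hy12 : y1 ≠ y2)
    (hz1 : z1 ≠ x ∧ z1 ≠ y) (hz2 : z2 ≠ x ∧ z2 ≠ y) (hz12 : z1 ≠ z2) :
    IsPerfectMatchingSet (dotProd G1 G2 a b a' b' x y y1 y2 z1 z2 hy1 hy2 hz1 hz2)
      (liftEdgesLeft x y M1 ∪ liftEdgesRight V1 x y (M2 \ {s(x, y)})) ∧
    IsFFamily (dotProd G1 G2 a b a' b' x y y1 y2 z1 z2 hy1 hy2 hz1 hz2)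
      (liftEdgesLeft x y M1 ∪ liftEdgesRight V1 x y (M2 \ {s(x, y)}))
      (liftEdgesRight V1 x y A) (liftEdgesRight V1 x y B)
      (liftEdgesRight V1 x y C) (liftEdgesRight V1 x y D) :=
  stmt_12_general G1 G2 hG1 M1 hM1 c c' hcc' honly hcodd hc'odd a b a' b' he1 he2 M2 hM2 A B C D
    hFam x y he3 he3F y1 y2 z1 z2 hNx hNy hy1 hy2 hz1 hz2
end

section
/- Let G be a bridgeless cubic graph having a 2-factor each of whose cycles is a chordless 5-cycle, and let M be the perfect matching complementary to this 2-factor. Suppose there is a colouring of the edges of M with 5 colours such that, for every cycle Q of the 2-factor, the five edges of M incident with Q receive five distinct colours (equivalently, the 5-regular multigraph G* obtained by contracting each 5-cycle of the 2-factor to a single vertex has chromatic index 5). Then G admits a Fulkerson covering. -/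
open SimpleGraph

variable {V : Type*}

/-- `P` describes a 2-factor of `G` whose cycles are chordless 5-cycles:
a partition of the vertex set into 5-element parts each inducing a connected
2-regular (hence chordless cycle) subgraph of `G`. -/
def IsChordlessC5TwoFactor (G : SimpleGraph V) (P : Set (Set V)) : Prop :=
  P.PairwiseDisjoint id ∧ ⋃₀ P = Set.univ ∧
  ∀ S ∈ P, S.ncard = 5 ∧ (∀ v ∈ S, ({u | u ∈ S ∧ G.Adj v u}).ncard = 2) ∧
    (G.induce S).Connected

/-- The perfect matching complementary to the 2-factor described by `P`:
the edges of `G` not lying inside a part of `P`. -/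
def complementaryMatching (G : SimpleGraph V) (P : Set (Set V)) : Set (Sym2 V) :=
  {e | e ∈ G.edgeSet ∧ ¬ ∃ S ∈ P, ∀ v ∈ e, v ∈ S}

/-!
Besides the complementary perfect matching `M`, take for each colour `i` the matching `F i`
made of the `M`-edges of colour `i` together with, in every 5-cycle `C` of the 2-factor, the
perfect matching of the path `C - w`, where `w` is the vertex of `C` whose `M`-edge has colour
`i`; the `M`-edges at `C` are rainbow, so `w` exists and is unique. An `M`-edge `e` then lies in
`M` and in `F (c e)` only, and an edge `xy` of `C` lies in `F i` exactly when `w` is one of the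
two vertices of `C` adjacent to exactly one of `x`, `y`, which carry two distinct colours.
-/

namespace Set

variable {α : Type*} {s : Set α}

lemma exists_ne_eq_pair_of_ncard_eq_two (h : s.ncard = 2) {x : α} (hx : x ∈ s) :
    ∃ y, y ≠ x ∧ s = {x, y} := by
  obtain ⟨a, b, hab, rfl⟩ := ncard_eq_two.mp h
  rcases hx with rfl | rfl
  · exact ⟨b, hab.symm, rfl⟩
  · exact ⟨a, hab, pair_comm a x⟩

lemma eq_pair_of_ncard_eq_two (h : s.ncard = 2) {x y : α} (hxy : x ≠ y) (hx : x ∈ s)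
    (hy : y ∈ s) : s = {x, y} := by
  obtain ⟨z, -, rfl⟩ := exists_ne_eq_pair_of_ncard_eq_two h hx
  rcases hy with rfl | rfl
  · exact absurd rfl hxy
  · rfl

end Set

namespace SimpleGraph

variable {G : SimpleGraph V}

lemma subset_of_induce_connected {S T : Set V} (hconn : (G.induce S).Connected) (hTS : T ⊆ S)
    (hT : T.Nonempty) (hclosed : ∀ x ∈ T, S ∩ G.neighborSet x ⊆ T) : S ⊆ T := by
  obtain ⟨t, ht⟩ := hT
  intro u hu
  obtain ⟨p⟩ := hconn ⟨t, hTS ht⟩ ⟨u, hu⟩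
  have walk_mem : ∀ {a b : S}, (G.induce S).Walk a b → (a : V) ∈ T → (b : V) ∈ T := by
    intro a b p
    induction p with
    | nil => exact id
    | cons hadj _ ih => exact fun ha => ih (hclosed _ ha ⟨Subtype.coe_prop _, hadj⟩)
  exact walk_mem p ht

lemma adj_iff_cycleGraph_adj {n : ℕ} {S : Set V} {g : Fin (n + 2) → V}
    (hg : Function.Injective g) (hgS : ∀ k, g k ∈ S)
    (hN : ∀ k, S ∩ G.neighborSet (g k) = {g (k - 1), g (k + 1)}) (a b : Fin (n + 2)) :
    G.Adj (g a) (g b) ↔ (cycleGraph (n + 2)).Adj a b := by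
  rw [← mem_neighborSet, ← mem_neighborSet, cycleGraph_neighborSet]
  have : g b ∈ G.neighborSet (g a) ↔ g b ∈ S ∩ G.neighborSet (g a) :=
    (and_iff_right (hgS b)).symm
  rw [this, hN]
  simp only [Set.mem_insert_iff, Set.mem_singleton_iff, hg.eq_iff]

lemma exists_cycleGraph_embedding_of_injective {S : Set V} {g : Fin 5 → V}
    (hg : Function.Injective g) (hgS : ∀ k, g k ∈ S) (h5 : S.ncard = 5)
    (hreg : ∀ v ∈ S, (S ∩ G.neighborSet v).ncard = 2)
    (h0 : S ∩ G.neighborSet (g 0) = {g 4, g 1}) (h1 : S ∩ G.neighborSet (g 1) = {g 0, g 2})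
    (h4 : S ∩ G.neighborSet (g 4) = {g 3, g 0}) :
    ∃ e : cycleGraph 5 ↪g G, Set.range e = S := by
  have hsymm : ∀ {x y}, x ∈ S → y ∈ S ∩ G.neighborSet x → x ∈ S ∩ G.neighborSet y :=
    fun hx hy => ⟨hx, hy.2.symm⟩
  have hrange : Set.range g = S :=
    Set.eq_of_subset_of_ncard_le (Set.range_subset_iff.mpr hgS)
      (by simp [h5, Set.ncard_range_of_injective hg]) (Set.finite_of_ncard_pos (by omega))
  have h2 : S ∩ G.neighborSet (g 2) = {g 1, g 3} := by
    obtain ⟨x, hx1, hx⟩ :=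
      Set.exists_ne_eq_pair_of_ncard_eq_two (hreg _ (hgS 2)) (hsymm (hgS 1) (by simp [h1]))
    have hxN : x ∈ S ∩ G.neighborSet (g 2) := by simp [hx]
    obtain ⟨k, rfl⟩ : x ∈ Set.range g := hrange ▸ hxN.1
    have h2k := hsymm (hgS 2) hxN
    fin_cases k
    · simp [h0, hg.eq_iff] at h2k
    · exact absurd rfl hx1
    · exact absurd hxN.2 (G.loopless.irrefl _)
    · exact hx
    · simp [h4, hg.eq_iff] at h2k
  have h3 : S ∩ G.neighborSet (g 3) = {g 2, g 4} :=
    Set.eq_pair_of_ncard_eq_two (hreg _ (hgS 3)) (hg.ne (by decide))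
      (hsymm (hgS 2) (by simp [h2])) (hsymm (hgS 4) (by simp [h4]))
  have hN : ∀ k, S ∩ G.neighborSet (g k) = {g (k - 1), g (k + 1)} := by
    intro k
    fin_cases k
    exacts [h0, h1, h2, h3, h4]
  exact ⟨⟨⟨g, hg⟩, adj_iff_cycleGraph_adj hg hgS hN _ _⟩, hrange⟩

lemma ncard_le_of_induce_connected {S T : Set V} (hconn : (G.induce S).Connected)
    (hT : T.Finite) (hTS : T ⊆ S) (hne : T.Nonempty)
    (hclosed : ∀ x ∈ T, S ∩ G.neighborSet x ⊆ T) : S.ncard ≤ T.ncard :=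
  Set.ncard_le_ncard (subset_of_induce_connected hconn hTS hne hclosed) hT

lemma ends_ne_of_neighborSet_eq_pair {S : Set V} (h5 : S.ncard = 5)
    (hreg : ∀ v ∈ S, (S ∩ G.neighborSet v).ncard = 2) (hconn : (G.induce S).Connected)
    {v0 v1 v2 v3 v4 : V} (hv0 : v0 ∈ S) (h14 : v1 ≠ v4)
    (hN0 : S ∩ G.neighborSet v0 = {v1, v4}) (hN1 : S ∩ G.neighborSet v1 = {v0, v2})
    (hN4 : S ∩ G.neighborSet v4 = {v0, v3}) : v2 ≠ v4 ∧ v1 ≠ v3 ∧ v2 ≠ v3 := by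
  have hsymm : ∀ {x y}, x ∈ S → y ∈ S ∩ G.neighborSet x → x ∈ S ∩ G.neighborSet y :=
    fun hx hy => ⟨hx, hy.2.symm⟩
  have hv1 : v1 ∈ S ∩ G.neighborSet v0 := by simp [hN0]
  have hv4 : v4 ∈ S ∩ G.neighborSet v0 := by simp [hN0]
  have hv2 : v2 ∈ S ∩ G.neighborSet v1 := by simp [hN1]
  have hv3 : v3 ∈ S ∩ G.neighborSet v4 := by simp [hN4]
  have h24 : v2 ≠ v4 := by
    rintro rfl
    obtain rfl : v1 = v3 := by
      have := hsymm hv1.1 hv2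
      rw [hN4] at this
      exact this.resolve_left hv1.2.ne'
    have := ncard_le_of_induce_connected (T := {v0, v1, v2}) hconn (by simp)
      (by simp [Set.insert_subset_iff, hv0, hv1.1, hv2.1]) (by simp)
      (by simp [hN0, hN1, hN4, Set.insert_subset_iff])
    grw [Set.ncard_insert_le, Set.ncard_insert_le, Set.ncard_singleton] at this
    omega
  have h13 : v1 ≠ v3 := by
    rintro rfl
    have := hsymm hv4.1 hv3
    rw [hN1] at this
    exact h24 (this.resolve_left hv4.2.ne').symm
  refine ⟨h24, h13, ?_⟩
  rintro rfl
  have hN2 : S ∩ G.neighborSet v2 = {v1, v4} :=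
    Set.eq_pair_of_ncard_eq_two (hreg v2 hv2.1) h14 (hsymm hv1.1 hv2) (hsymm hv4.1 hv3)
  have := ncard_le_of_induce_connected (T := {v0, v1, v2, v4}) hconn (by simp)
    (by simp [Set.insert_subset_iff, hv0, hv1.1, hv2.1, hv4.1]) (by simp)
    (by simp [hN0, hN1, hN2, hN4, Set.insert_subset_iff])
  grw [Set.ncard_insert_le, Set.ncard_insert_le, Set.ncard_insert_le, Set.ncard_singleton] at this
  omega

theorem exists_cycleGraph_embedding {S : Set V} (h5 : S.ncard = 5)
    (hreg : ∀ v ∈ S, (S ∩ G.neighborSet v).ncard = 2) (hconn : (G.induce S).Connected) :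
    ∃ g : cycleGraph 5 ↪g G, Set.range g = S := by
  obtain ⟨v0, hv0⟩ : S.Nonempty := Set.nonempty_of_ncard_ne_zero (by omega)
  obtain ⟨v1, v4, h14, hN0⟩ := Set.ncard_eq_two.mp (hreg v0 hv0)
  have hv1 : v1 ∈ S ∩ G.neighborSet v0 := by simp [hN0]
  have hv4 : v4 ∈ S ∩ G.neighborSet v0 := by simp [hN0]
  obtain ⟨v2, h20, hN1⟩ :=
    Set.exists_ne_eq_pair_of_ncard_eq_two (hreg v1 hv1.1) ⟨hv0, hv1.2.symm⟩
  obtain ⟨v3, h30, hN4⟩ :=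
    Set.exists_ne_eq_pair_of_ncard_eq_two (hreg v4 hv4.1) ⟨hv0, hv4.2.symm⟩
  have hv2 : v2 ∈ S ∩ G.neighborSet v1 := by simp [hN1]
  have hv3 : v3 ∈ S ∩ G.neighborSet v4 := by simp [hN4]
  obtain ⟨h24, h13, h23⟩ :=
    ends_ne_of_neighborSet_eq_pair h5 hreg hconn hv0 h14 hN0 hN1 hN4
  have hg : Function.Injective ![v0, v1, v2, v3, v4] := by
    simp only [Matrix.vecCons, Fin.cons_injective_iff]
    simp [hv1.2.ne, h20.symm, h30.symm, hv4.2.ne, hv2.2.ne, h13, h14, h23, h24, hv3.2.ne',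
      Function.injective_of_subsingleton]
  refine exists_cycleGraph_embedding_of_injective hg ?_ h5 hreg ?_ ?_ ?_
  · intro k
    fin_cases k
    exacts [hv0, hv1.1, hv2.1, hv3.1, hv4.1]
  · simpa [Set.pair_comm] using hN0
  · simpa using hN1
  · simpa [Set.pair_comm] using hN4

/-- For `w` on a 5-cycle `S`, the edges `xy` of `S - w` with an end adjacent to `w` form the
perfect matching of the path `S - w`. -/
def NearAdj (G : SimpleGraph V) (S : Set V) (w x y : V) : Prop :=
  x ∈ S ∧ y ∈ S ∧ G.Adj x y ∧ x ≠ w ∧ y ≠ w ∧ (G.Adj w x ∨ G.Adj w y)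

lemma NearAdj.symm {S : Set V} {w x y : V} (h : G.NearAdj S w x y) : G.NearAdj S w y x := by
  obtain ⟨hx, hy, hxy, hxw, hyw, hw⟩ := h
  exact ⟨hy, hx, hxy.symm, hyw, hxw, hw.symm⟩

def nearMatching (G : SimpleGraph V) (S : Set V) (w : V) : Set (Sym2 V) :=
  Sym2.fromRel (r := G.NearAdj S w) ⟨fun _ _ => NearAdj.symm⟩

@[simp] lemma mk_mem_nearMatching {S : Set V} {w x y : V} :
    s(x, y) ∈ G.nearMatching S w ↔ G.NearAdj S w x y := Sym2.fromRel_prop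

lemma Embedding.nearAdj_iff {W : Type*} {H : SimpleGraph W} (g : H ↪g G) (w x y : W) :
    G.NearAdj (Set.range g) (g w) (g x) (g y) ↔ H.NearAdj Set.univ w x y := by
  simp [NearAdj, g.injective.ne_iff]

lemma existsUnique_nearAdj_cycleGraph_five :
    ∀ w x : Fin 5, x ≠ w → ∃! y, (cycleGraph 5).NearAdj Set.univ w x y := by
  simp only [ExistsUnique, NearAdj, Set.mem_univ, true_and]
  decide

lemma ncard_nearAdj_cycleGraph_five (x y : Fin 5) (h : (cycleGraph 5).Adj x y) :
    {w | (cycleGraph 5).NearAdj Set.univ w x y}.ncard = 2 := by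
  simp only [NearAdj, Set.mem_univ, true_and]
  rw [Set.ncard_eq_toFinset_card', Set.toFinset_ofPred]
  revert x y
  decide

lemma Embedding.existsUnique_nearAdj (g : cycleGraph 5 ↪g G) {w v : V} (hw : w ∈ Set.range g)
    (hv : v ∈ Set.range g) (hvw : v ≠ w) : ∃! y, G.NearAdj (Set.range g) w v y := by
  obtain ⟨c, rfl⟩ := hw
  obtain ⟨a, rfl⟩ := hv
  obtain ⟨b, hb, hb_unique⟩ :=
    existsUnique_nearAdj_cycleGraph_five c a (fun h => hvw (congrArg g h))
  refine ⟨g b, (g.nearAdj_iff c a b).mpr hb, fun y hy => ?_⟩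
  obtain ⟨b', rfl⟩ := hy.2.1
  rw [hb_unique b' ((g.nearAdj_iff c a b').mp hy)]

lemma Embedding.ncard_nearAdj (g : cycleGraph 5 ↪g G) {x y : V} (hx : x ∈ Set.range g)
    (hy : y ∈ Set.range g) (hxy : G.Adj x y) :
    {w | w ∈ Set.range g ∧ G.NearAdj (Set.range g) w x y}.ncard = 2 := by
  obtain ⟨a, rfl⟩ := hx
  obtain ⟨b, rfl⟩ := hy
  have : {w | w ∈ Set.range g ∧ G.NearAdj (Set.range g) w (g a) (g b)} =
      g '' {c | (cycleGraph 5).NearAdj Set.univ c a b} := by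
    ext w
    constructor
    · rintro ⟨⟨c, rfl⟩, h⟩
      exact ⟨c, (g.nearAdj_iff c a b).mp h, rfl⟩
    · rintro ⟨c, h, rfl⟩
      exact ⟨⟨c, rfl⟩, (g.nearAdj_iff c a b).mpr h⟩
  rw [this, Set.ncard_image_of_injective _ g.injective]
  exact ncard_nearAdj_cycleGraph_five a b (g.map_adj_iff.mp hxy)

end SimpleGraph

lemma IsMatchingSet.eq_of_mem {G : SimpleGraph V} {M : Set (Sym2 V)} (hM : IsMatchingSet G M)
    {e f : Sym2 V} {v : V} (he : e ∈ M) (hf : f ∈ M) (hve : v ∈ e) (hvf : v ∈ f) :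
    e = f := by
  by_contra hne
  exact hM.2 he hf hne v hve hvf

lemma isPerfectMatchingSet_of_existsUnique {G : SimpleGraph V} {F : Set (Sym2 V)}
    (hF : F ⊆ G.edgeSet) (h : ∀ v, ∃! e, e ∈ F ∧ v ∈ e) : IsPerfectMatchingSet G F :=
  ⟨⟨hF, fun _ he _ hf hne v hve hvf => hne ((h v).unique ⟨he, hve⟩ ⟨hf, hvf⟩)⟩,
    fun v => (h v).exists⟩

open Classical in
lemma ncard_setOf_mem_cons {α : Type*} {n : ℕ} (M : Set α) (F : Fin n → Set α) (e : α) :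
    {i : Fin (n + 1) | e ∈ (Fin.cons M F : Fin (n + 1) → Set α) i}.ncard =
      {i | e ∈ F i}.ncard + if e ∈ M then 1 else 0 := by
  rw [Set.ncard_eq_toFinset_card', Set.ncard_eq_toFinset_card', Set.toFinset_ofPred,
    Set.toFinset_ofPred, Finset.card_filter, Finset.card_filter, Fin.sum_univ_succ, add_comm]
  simp only [Fin.cons_zero, Fin.cons_succ]

lemma isFulkersonCovering_cons {G : SimpleGraph V} {M : Set (Sym2 V)}
    {F : Fin 5 → Set (Sym2 V)} (hM : IsPerfectMatchingSet G M)
    (hF : ∀ i, IsPerfectMatchingSet G (F i))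
    (hcount_mem : ∀ e ∈ M, {i | e ∈ F i}.ncard = 1)
    (hcount_notMem : ∀ e ∈ G.edgeSet, e ∉ M → {i | e ∈ F i}.ncard = 2) :
    IsFulkersonCovering G (Fin.cons M F) := by
  refine ⟨Fin.cases hM hF, fun e he => ?_⟩
  by_cases heM : e ∈ M
  · rw [ncard_setOf_mem_cons, if_pos heM, hcount_mem e heM]
  · rw [ncard_setOf_mem_cons, if_neg heM, hcount_notMem e he heM]

def IsRainbowOnCycles (G : SimpleGraph V) (P : Set (Set V)) (c : Sym2 V → Fin 5) : Prop :=
  ∀ S ∈ P, ∀ e ∈ complementaryMatching G P, ∀ f ∈ complementaryMatching G P,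
    (∃ v ∈ S, v ∈ e) → (∃ v ∈ S, v ∈ f) → e ≠ f → c e ≠ c f

def fulkersonMatching (G : SimpleGraph V) (P : Set (Set V)) (c : Sym2 V → Fin 5) (i : Fin 5) :
    Set (Sym2 V) :=
  {e | e ∈ complementaryMatching G P ∧ c e = i} ∪
    {e | ∃ S ∈ P, ∃ w ∈ S, (∃ f ∈ complementaryMatching G P, w ∈ f ∧ c f = i) ∧
      e ∈ G.nearMatching S w}

section

variable {G : SimpleGraph V} {P : Set (Set V)} {c : Sym2 V → Fin 5} {S : Set V}

lemma mk_mem_complementaryMatching_iff {x y : V} :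
    s(x, y) ∈ complementaryMatching G P ↔ G.Adj x y ∧ ∀ S ∈ P, x ∈ S → y ∉ S := by
  simp only [complementaryMatching, Set.mem_ofPred_eq, mem_edgeSet, Sym2.forall_mem_pair,
    not_exists, not_and]

lemma mk_notMem_complementaryMatching (hS : S ∈ P) {x y : V} (hx : x ∈ S) (hy : y ∈ S) :
    s(x, y) ∉ complementaryMatching G P :=
  fun h => (mk_mem_complementaryMatching_iff.mp h).2 S hS hx hy

lemma IsRainbowOnCycles.eq_of_colour_eq (hc : IsRainbowOnCycles G P c) (hS : S ∈ P) {w w' : V}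
    (hw : w ∈ S) (hw' : w' ∈ S) {f f' : Sym2 V} (hf : f ∈ complementaryMatching G P)
    (hf' : f' ∈ complementaryMatching G P) (hwf : w ∈ f) (hwf' : w' ∈ f')
    (hcol : c f = c f') : w = w' := by
  by_contra hne
  obtain rfl | hff' := eq_or_ne f f'
  · rw [(Sym2.mem_and_mem_iff hne).mp ⟨hwf, hwf'⟩] at hf
    exact mk_notMem_complementaryMatching hS hw hw' hf
  · exact hc S hS f hf f' hf' ⟨w, hw, hwf⟩ ⟨w', hw', hwf'⟩ hff' hcol

lemma IsRainbowOnCycles.injOn_comp (hc : IsRainbowOnCycles G P c) (hS : S ∈ P)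
    {m : V → Sym2 V} (hm : ∀ v, m v ∈ complementaryMatching G P ∧ v ∈ m v) :
    Set.InjOn (c ∘ m) S :=
  fun _ hw _ hw' hcol => hc.eq_of_colour_eq hS hw hw' (hm _).1 (hm _).1 (hm _).2 (hm _).2 hcol

lemma fulkersonMatching_subset_edgeSet (i : Fin 5) :
    fulkersonMatching G P c i ⊆ G.edgeSet := by
  rintro e (⟨he, -⟩ | ⟨S, -, w, -, -, hnear⟩)
  · exact he.1
  · induction e using Sym2.ind with
    | _ x y => exact (mk_mem_nearMatching.mp hnear).2.2.1

namespace IsChordlessC5TwoFactor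

lemma eq_of_mem (hP : IsChordlessC5TwoFactor G P) {T : Set V} {v : V} (hS : S ∈ P) (hT : T ∈ P)
    (hvS : v ∈ S) (hvT : v ∈ T) : S = T :=
  hP.1.elim hS hT (Set.not_disjoint_iff.mpr ⟨v, hvS, hvT⟩)

lemma exists_mem (hP : IsChordlessC5TwoFactor G P) (v : V) : ∃ S ∈ P, v ∈ S :=
  Set.mem_sUnion.mp (hP.2.1 ▸ Set.mem_univ v)

lemma exists_cycleGraph_embedding (hP : IsChordlessC5TwoFactor G P) (hS : S ∈ P) :
    ∃ g : cycleGraph 5 ↪g G, Set.range g = S :=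
  SimpleGraph.exists_cycleGraph_embedding (hP.2.2 S hS).1 (hP.2.2 S hS).2.1 (hP.2.2 S hS).2.2

lemma existsUnique_mem_complementaryMatching (hP : IsChordlessC5TwoFactor G P)
    (hcubic : IsCubic G) (v : V) :
    ∃! e, e ∈ complementaryMatching G P ∧ v ∈ e := by
  obtain ⟨S, hS, hvS⟩ := hP.exists_mem v
  have hinner : (S ∩ G.neighborSet v).ncard = 2 := (hP.2.2 S hS).2.1 v hvS
  obtain ⟨u, hu⟩ : ∃ u, G.neighborSet v \ (S ∩ G.neighborSet v) = {u} := by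
    rw [← Set.ncard_eq_one, Set.ncard_sdiff Set.inter_subset_right
      (Set.finite_of_ncard_pos (by omega)), hcubic v, hinner]
  have hmem (u' : V) :
      u' ∈ G.neighborSet v \ (S ∩ G.neighborSet v) ↔ G.Adj v u' ∧ u' ∉ S :=
    and_congr_right fun hadj => by simp [hadj]
  have hu' := (hmem u).mp (hu ▸ rfl)
  refine ⟨s(v, u), ⟨mk_mem_complementaryMatching_iff.mpr ⟨hu'.1, fun T hT hvT => ?_⟩,
    Sym2.mem_mk_left v u⟩, ?_⟩
  · exact hP.eq_of_mem hS hT hvS hvT ▸ hu'.2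
  · rintro e ⟨he, hve⟩
    obtain ⟨u', rfl⟩ := Sym2.mem_iff_exists.mp hve
    obtain ⟨hadj, hout⟩ := mk_mem_complementaryMatching_iff.mp he
    have : u' ∈ ({u} : Set V) := hu ▸ (hmem u').mpr ⟨hadj, hout S hS hvS⟩
    rw [Set.mem_singleton_iff.mp this]

lemma isPerfectMatchingSet_complementaryMatching (hP : IsChordlessC5TwoFactor G P)
    (hcubic : IsCubic G) :
    IsPerfectMatchingSet G (complementaryMatching G P) :=
  isPerfectMatchingSet_of_existsUnique (fun _ he => he.1)
    (hP.existsUnique_mem_complementaryMatching hcubic)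

lemma exists_colour_eq (hP : IsChordlessC5TwoFactor G P) (hcubic : IsCubic G)
    (hc : IsRainbowOnCycles G P c) (hS : S ∈ P) (i : Fin 5) :
    ∃ w ∈ S, ∃ f ∈ complementaryMatching G P, w ∈ f ∧ c f = i := by
  choose m hm using (hP.isPerfectMatchingSet_complementaryMatching hcubic).2
  have himage : (c ∘ m) '' S = Set.univ :=
    Set.eq_of_subset_of_ncard_le (Set.subset_univ _)
      (by rw [Set.ncard_univ, Nat.card_fin, (hc.injOn_comp hS hm).ncard_image, (hP.2.2 S hS).1])
  obtain ⟨w, hw, hwi⟩ : i ∈ (c ∘ m) '' S := himage ▸ Set.mem_univ i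
  exact ⟨w, hw, m w, (hm w).1, (hm w).2, hwi⟩

lemma mk_mem_fulkersonMatching_iff (hP : IsChordlessC5TwoFactor G P) (hS : S ∈ P) {x y : V}
    (hx : x ∈ S) (i : Fin 5) :
    s(x, y) ∈ fulkersonMatching G P c i ↔
      (s(x, y) ∈ complementaryMatching G P ∧ c s(x, y) = i) ∨
        ∃ w ∈ S, (∃ f ∈ complementaryMatching G P, w ∈ f ∧ c f = i) ∧
          G.NearAdj S w x y := by
  simp only [fulkersonMatching, Set.mem_union, Set.mem_ofPred_eq, mk_mem_nearMatching]
  refine or_congr_right ⟨?_, fun ⟨w, hw, hwi, hnear⟩ => ⟨S, hS, w, hw, hwi, hnear⟩⟩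
  rintro ⟨T, hT, w, hw, hwi, hnear⟩
  obtain rfl := hP.eq_of_mem hS hT hx hnear.1
  exact ⟨w, hw, hwi, hnear⟩

lemma existsUnique_mem_fulkersonMatching (hP : IsChordlessC5TwoFactor G P) (hcubic : IsCubic G)
    (hc : IsRainbowOnCycles G P c) (i : Fin 5) (v : V) :
    ∃! e, e ∈ fulkersonMatching G P c i ∧ v ∈ e := by
  have hM := hP.isPerfectMatchingSet_complementaryMatching hcubic
  obtain ⟨S, hS, hvS⟩ := hP.exists_mem v
  obtain ⟨fv, ⟨hfv, hvfv⟩, hfv_unique⟩ := hP.existsUnique_mem_complementaryMatching hcubic v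
  have hmem (y : V) := hP.mk_mem_fulkersonMatching_iff (c := c) (y := y) hS hvS i
  obtain ⟨g, rfl⟩ := hP.exists_cycleGraph_embedding hS
  by_cases hvi : c fv = i
  · refine ⟨fv, ⟨Or.inl ⟨hfv, hvi⟩, hvfv⟩, ?_⟩
    rintro e ⟨he, hve⟩
    obtain ⟨y, rfl⟩ := Sym2.mem_iff_exists.mp hve
    rcases (hmem y).mp he with ⟨heM, -⟩ | ⟨w, hw, ⟨f, hf, hwf, hfi⟩, hnear⟩
    · exact hfv_unique _ ⟨heM, hve⟩
    · exact absurd (hc.eq_of_colour_eq hS hvS hw hfv hf hvfv hwf (hvi.trans hfi.symm))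
        hnear.2.2.2.1
  · obtain ⟨w, hw, f, hf, hwf, hfi⟩ := hP.exists_colour_eq hcubic hc hS i
    have hvw : v ≠ w := by
      rintro rfl
      exact hvi (hM.1.eq_of_mem hfv hf hvfv hwf ▸ hfi)
    obtain ⟨y, hy, hy_unique⟩ := g.existsUnique_nearAdj hw hvS hvw
    refine ⟨s(v, y), ⟨(hmem y).mpr (Or.inr ⟨w, hw, ⟨f, hf, hwf, hfi⟩, hy⟩),
      Sym2.mem_mk_left v y⟩, ?_⟩
    rintro e ⟨he, hve⟩
    obtain ⟨y', rfl⟩ := Sym2.mem_iff_exists.mp hve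
    rcases (hmem y').mp he with ⟨heM, hei⟩ | ⟨w', hw', ⟨f', hf', hwf', hfi'⟩, hnear⟩
    · exact absurd (hfv_unique _ ⟨heM, hve⟩ ▸ hei) hvi
    · obtain rfl := hc.eq_of_colour_eq hS hw' hw hf' hf hwf' hwf (hfi'.trans hfi.symm)
      rw [hy_unique y' hnear]

lemma isPerfectMatchingSet_fulkersonMatching (hP : IsChordlessC5TwoFactor G P)
    (hcubic : IsCubic G) (hc : IsRainbowOnCycles G P c) (i : Fin 5) :
    IsPerfectMatchingSet G (fulkersonMatching G P c i) :=
  isPerfectMatchingSet_of_existsUnique (fulkersonMatching_subset_edgeSet i)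
    (hP.existsUnique_mem_fulkersonMatching hcubic hc i)

lemma ncard_setOf_mem_fulkersonMatching_of_mem (hP : IsChordlessC5TwoFactor G P) {e : Sym2 V}
    (he : e ∈ complementaryMatching G P) : {i | e ∈ fulkersonMatching G P c i}.ncard = 1 := by
  induction e using Sym2.ind with
  | _ x y =>
  obtain ⟨S, hS, hx⟩ := hP.exists_mem x
  have : {i | s(x, y) ∈ fulkersonMatching G P c i} = {c s(x, y)} := by
    ext i
    rw [Set.mem_ofPred_eq, hP.mk_mem_fulkersonMatching_iff hS hx, Set.mem_singleton_iff]
    constructor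
    · rintro (⟨-, h⟩ | ⟨w, -, -, hnear⟩)
      · exact h.symm
      · exact absurd he (mk_notMem_complementaryMatching hS hx hnear.2.1)
    · rintro rfl
      exact Or.inl ⟨he, rfl⟩
  rw [this, Set.ncard_singleton]

lemma ncard_setOf_mem_fulkersonMatching_of_notMem (hP : IsChordlessC5TwoFactor G P)
    (hcubic : IsCubic G) (hc : IsRainbowOnCycles G P c) {e : Sym2 V} (he : e ∈ G.edgeSet)
    (heM : e ∉ complementaryMatching G P) : {i | e ∈ fulkersonMatching G P c i}.ncard = 2 := by
  induction e using Sym2.ind with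
  | _ x y =>
  obtain ⟨S, hS, hx, hy⟩ : ∃ S ∈ P, x ∈ S ∧ y ∈ S := by
    by_contra! h
    exact heM (mk_mem_complementaryMatching_iff.mpr ⟨he, h⟩)
  have hM := hP.isPerfectMatchingSet_complementaryMatching hcubic
  choose m hm using hM.2
  have hcolour (w : V) (i : Fin 5) :
      (∃ f ∈ complementaryMatching G P, w ∈ f ∧ c f = i) ↔ c (m w) = i :=
    ⟨fun ⟨f, hf, hwf, hfi⟩ => hM.1.eq_of_mem (hm w).1 hf (hm w).2 hwf ▸ hfi,
      fun h => ⟨m w, (hm w).1, (hm w).2, h⟩⟩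
  obtain ⟨g, rfl⟩ := hP.exists_cycleGraph_embedding hS
  have : {i | s(x, y) ∈ fulkersonMatching G P c i} =
      (c ∘ m) '' {w | w ∈ Set.range g ∧ G.NearAdj (Set.range g) w x y} := by
    ext i
    simp only [Set.mem_ofPred_eq, hP.mk_mem_fulkersonMatching_iff hS hx, hcolour, heM,
      false_and, false_or, Set.mem_image, Function.comp_apply]
    grind
  rw [this, (hc.injOn_comp hS hm).mono (fun _ hw => hw.1) |>.ncard_image,
    g.ncard_nearAdj hx hy he]

end IsChordlessC5TwoFactor

end

theorem stmt_14_general {V : Type*} (G : SimpleGraph V)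
    (hcubic : IsCubic G)
    (P : Set (Set V)) (hP : IsChordlessC5TwoFactor G P)
    (c : Sym2 V → Fin 5)
    (hc : ∀ S ∈ P, ∀ e ∈ complementaryMatching G P, ∀ f ∈ complementaryMatching G P,
      (∃ v ∈ S, v ∈ e) → (∃ v ∈ S, v ∈ f) → e ≠ f → c e ≠ c f) :
    ∃ F : Fin 6 → Set (Sym2 V), IsFulkersonCovering G F :=
  ⟨Fin.cons (complementaryMatching G P) (fulkersonMatching G P c),
    isFulkersonCovering_cons (hP.isPerfectMatchingSet_complementaryMatching hcubic)
      (hP.isPerfectMatchingSet_fulkersonMatching hcubic hc)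
      (fun _ he => hP.ncard_setOf_mem_fulkersonMatching_of_mem he)
      (fun _ he heM => hP.ncard_setOf_mem_fulkersonMatching_of_notMem hcubic hc he heM)⟩

/-- Let `G` be a bridgeless cubic graph with a 2-factor all of whose
cycles are chordless 5-cycles, with complementary perfect matching `M`. If the edges of
`M` can be coloured with 5 colours so that for each cycle of the 2-factor the five edges
of `M` incident with it get five distinct colours (i.e. the contracted 5-regular
multigraph `G*` has chromatic index 5), then `G` admits a Fulkerson covering. -/
theorem stmt_14 {V : Type*} [Fintype V] (G : SimpleGraph V)
    (hcubic : IsCubic G) (hbridgeless : Bridgeless G)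
    (P : Set (Set V)) (hP : IsChordlessC5TwoFactor G P)
    (c : Sym2 V → Fin 5)
    (hc : ∀ S ∈ P, ∀ e ∈ complementaryMatching G P, ∀ f ∈ complementaryMatching G P,
      (∃ v ∈ S, v ∈ e) → (∃ v ∈ S, v ∈ f) → e ≠ f → c e ≠ c f) :
    ∃ F : Fin 6 → Set (Sym2 V), IsFulkersonCovering G F :=
  stmt_14_general G hcubic P hP c hc
end
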